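/- Let λ = P + U_2 P^{−1} + U_3 P^{−2} + ⋯ be a Laurent series in P^{−1} with smooth coefficients, φ(T) a smooth function independent of P, and μ := e^{−ad φ}λ. Let A be any Laurent series, let ρ(T) be a smooth function independent of P with ∂_X ρ = res{A, λ}, and set C := e^{−ad φ}A + P^{−1}ρ and B := {μ, C}_{≥−1} − {μ, C_{≥1}}. Then (B)_0 = ∂_X( (e^{−ad φ}A)_0 ) and e^{ad φ}B + { (e^{−ad φ}A)_0, λ } = {λ, A}_+ − {λ, A_+}. (This says the Miura map carries the first Hamiltonian structure J^{(1)} of dmKP to the first Hamiltonian structure Θ^{(1)} of dKP: Θ^{(1)} = G′ J^{(1)} G′^†.) -/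

import Mathlib

namespace DMKP

/-- Coefficient functions of a formal Laurent series in `P⁻¹` with time variables
`T = (T₁, …, T_N)`: `A n` is the coefficient of `P^n`. -/
abbrev Coeffs (N : ℕ) := ℤ → (Fin N → ℝ) → ℝ

variable {N : ℕ}

/-- Partial derivative in the direction of the `q`-th time variable. -/
noncomputable def pd (q : Fin N) (f : (Fin N → ℝ) → ℝ) : (Fin N → ℝ) → ℝ :=
  fun x => fderiv ℝ f x (Pi.single q 1)

/-- Finitely many positive powers of `P`. -/
def BddPow (A : Coeffs N) : Prop := ∃ m : ℤ, ∀ n : ℤ, m < n → A n = 0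

/-- All coefficients are smooth functions of the time variables. -/
def SmoothCoeffs (A : Coeffs N) : Prop := ∀ n : ℤ, ContDiff ℝ (⊤ : ℕ∞) (A n)

/-- A Laurent series in `P⁻¹` with smooth coefficients. -/
def IsLaurent (A : Coeffs N) : Prop := BddPow A ∧ SmoothCoeffs A

/-- Termwise `∂_P`. -/
def dP (A : Coeffs N) : Coeffs N := fun n x => ((n + 1 : ℤ) : ℝ) * A (n + 1) x

/-- Termwise `∂_{T_q}`. -/
noncomputable def dT (q : Fin N) (A : Coeffs N) : Coeffs N := fun n => pd q (A n)

/-- Termwise `∂_X`, where `X = T₁`. -/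
noncomputable def dX [NeZero N] (A : Coeffs N) : Coeffs N := dT 0 A

/-- Termwise product of Laurent series. -/
noncomputable def mul (A B : Coeffs N) : Coeffs N := fun n x => ∑' i : ℤ, A i x * B (n - i) x

/-- The Poisson bracket `{f,g} = f_P g_X - f_X g_P`. -/
noncomputable def pb [NeZero N] (A B : Coeffs N) : Coeffs N :=
  fun n x => mul (dP A) (dX B) n x - mul (dX A) (dP B) n x

/-- Truncation keeping only powers `P^n` with `n ≥ k`. -/
def truncGe (k : ℤ) (A : Coeffs N) : Coeffs N := fun n => if k ≤ n then A n else 0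

/-- Truncation keeping only powers `P^n` with `n ≤ k`. -/
def truncLe (k : ℤ) (A : Coeffs N) : Coeffs N := fun n => if n ≤ k then A n else 0

/-- The residue: coefficient of `P⁻¹`. -/
def res (A : Coeffs N) : (Fin N → ℝ) → ℝ := A (-1)

/-- The constant Laurent series `1`. -/
def one' : Coeffs N := fun n => if n = 0 then (fun _ => (1 : ℝ)) else 0

/-- `powC A q` is the `q`-th power `A^q`. -/
noncomputable def powC (A : Coeffs N) : ℕ → Coeffs N
  | 0 => one'
  | q + 1 => mul A (powC A q)

/-- `e^{-ad φ} A = Σ_{k≥0} (1/k!) (φ_X)^k ∂_P^k A`. -/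
noncomputable def expAdNeg [NeZero N] (φ : (Fin N → ℝ) → ℝ) (A : Coeffs N) : Coeffs N :=
  fun n x => ∑' k : ℕ, (pd 0 φ x) ^ k / (Nat.factorial k : ℝ) * (dP^[k] A) n x

/-- `e^{ad φ} A = Σ_{k≥0} (1/k!) (-φ_X)^k ∂_P^k A`. -/
noncomputable def expAdPos [NeZero N] (φ : (Fin N → ℝ) → ℝ) (A : Coeffs N) : Coeffs N :=
  fun n x => ∑' k : ℕ, (-(pd 0 φ x)) ^ k / (Nat.factorial k : ℝ) * (dP^[k] A) n x

/-- A `P`-independent function viewed as a Laurent series concentrated at `P^0`. -/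
def const (φ : (Fin N → ℝ) → ℝ) : Coeffs N := fun n => if n = 0 then φ else 0

/-- Evaluation of the polynomial (non-negative) part of `A` at `P = φ_X`. -/
noncomputable def evalAtPhiX [NeZero N] (A : Coeffs N) (φ : (Fin N → ℝ) → ℝ) :
    (Fin N → ℝ) → ℝ :=
  fun x => ∑' k : ℕ, A (k : ℤ) x * (pd 0 φ x) ^ k

/-- The shape `λ = P + U₂ P⁻¹ + U₃ P⁻² + ⋯` of the dKP Lax function. -/
def IsDKPShape (lam : Coeffs N) : Prop :=
  (lam 1 = fun _ => (1 : ℝ)) ∧ lam 0 = 0 ∧ ∀ n : ℤ, 2 ≤ n → lam n = 0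

/-- The shape `μ = P + V₀ + V₁ P⁻¹ + ⋯` of the dmKP Lax function. -/
def IsDMKPShape (mu : Coeffs N) : Prop :=
  (mu 1 = fun _ => (1 : ℝ)) ∧ ∀ n : ℤ, 2 ≤ n → mu n = 0


-- pd lemmas
lemma pd_const (q : Fin N) (c : ℝ) : pd q (fun _ => c) = fun _ => 0 := by
  funext x; simp [pd]

lemma pd_zero (q : Fin N) : pd q (0 : (Fin N → ℝ) → ℝ) = 0 := by
  funext x; simp [pd]

lemma pd_add (q : Fin N) {f g : (Fin N → ℝ) → ℝ} (hf : Differentiable ℝ f)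
    (hg : Differentiable ℝ g) (x : Fin N → ℝ) :
    pd q (fun y => f y + g y) x = pd q f x + pd q g x := by
  simp [pd, fderiv_fun_add (hf x) (hg x)]

lemma pd_sub (q : Fin N) {f g : (Fin N → ℝ) → ℝ} (hf : Differentiable ℝ f)
    (hg : Differentiable ℝ g) (x : Fin N → ℝ) :
    pd q (fun y => f y - g y) x = pd q f x - pd q g x := by
  simp [pd, fderiv_fun_sub (hf x) (hg x)]

lemma pd_mul (q : Fin N) {f g : (Fin N → ℝ) → ℝ} (hf : Differentiable ℝ f)
    (hg : Differentiable ℝ g) (x : Fin N → ℝ) :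
    pd q (fun y => f y * g y) x = pd q f x * g x + f x * pd q g x := by
  simp [pd, fderiv_fun_mul (hf x) (hg x)]; ring

lemma pd_smul (q : Fin N) (c : ℝ) {f : (Fin N → ℝ) → ℝ} (hf : Differentiable ℝ f)
    (x : Fin N → ℝ) : pd q (fun y => c * f y) x = c * pd q f x := by
  simp [pd, fderiv_const_mul (hf x) c]

lemma pd_sum (q : Fin N) {ι : Type*} (s : Finset ι) (f : ι → (Fin N → ℝ) → ℝ)
    (hf : ∀ i ∈ s, Differentiable ℝ (f i)) (x : Fin N → ℝ) :
    pd q (fun y => ∑ i ∈ s, f i y) x = ∑ i ∈ s, pd q (f i) x := by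
  classical
  induction s using Finset.induction_on with
  | empty => simp [pd]
  | @insert a s' hns ih =>
    have h : (fun y => ∑ i ∈ insert a s', f i y) = fun y => f a y + ∑ i ∈ s', f i y := by
      funext y; rw [Finset.sum_insert hns]
    rw [h, pd_add q (hf a (Finset.mem_insert_self a s'))
      (Differentiable.fun_sum (fun i hi => hf i (Finset.mem_insert_of_mem hi))),
      ih (fun i hi => hf i (Finset.mem_insert_of_mem hi)), Finset.sum_insert hns]

lemma pd_pow (q : Fin N) {f : (Fin N → ℝ) → ℝ} (hf : Differentiable ℝ f) (k : ℕ)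
    (x : Fin N → ℝ) :
    pd q (fun y => f y ^ k) x = (k : ℝ) * f x ^ (k - 1) * pd q f x := by
  induction k with
  | zero => simp [pd_const]
  | succ k ih =>
    have : (fun y => f y ^ (k+1)) = fun y => f y * f y ^ k := by funext y; ring
    rw [this, pd_mul q hf (hf.fun_pow k), ih]
    rcases Nat.eq_zero_or_pos k with hk | hk
    · subst hk; simp
    · have : k - 1 + 1 = k := Nat.succ_pred_eq_of_pos hk
      rw [← this]; push_cast; ring

lemma smooth_pd {f : (Fin N → ℝ) → ℝ} (hf : ContDiff ℝ (⊤ : ℕ∞) f) (q : Fin N) :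
    ContDiff ℝ (⊤ : ℕ∞) (pd q f) := by
  have h1 : ContDiff ℝ (⊤ : ℕ∞) (fderiv ℝ f) := hf.fderiv_right (by simp)
  exact (ContinuousLinearMap.apply ℝ ℝ (Pi.single q 1 : Fin N → ℝ)).contDiff.comp h1


-- rising factorial coefficient
noncomputable def izf (n : ℤ) (k : ℕ) : ℝ := ∏ j ∈ Finset.range k, ((n : ℝ) + j + 1)

lemma izf_zero (n : ℤ) : izf n 0 = 1 := by simp [izf]

lemma izf_succ (n : ℤ) (k : ℕ) : izf n (k + 1) = izf n k * ((n : ℝ) + k + 1) := by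
  simp [izf, Finset.prod_range_succ]

lemma izf_succ' (n : ℤ) (k : ℕ) : izf n (k + 1) = ((n : ℝ) + 1) * izf (n + 1) k := by
  simp only [izf, Finset.prod_range_succ']
  rw [mul_comm]
  congr 1
  · simp
  · apply Finset.prod_congr rfl; intro j _; push_cast; ring

lemma izf_add (n : ℤ) (k l : ℕ) : izf n (k + l) = izf n k * izf (n + k) l := by
  simp only [izf, Finset.prod_range_add]
  congr 1
  apply Finset.prod_congr rfl; intro j _; push_cast; ring

lemma izf_vanish {n : ℤ} {k : ℕ} (hn : n < 0) (hk : 0 ≤ n + k) : izf n k = 0 := by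
  set j : ℕ := (-n - 1).toNat with hj
  have hj2 : (j : ℤ) = -n - 1 := by omega
  have hjr : j ∈ Finset.range k := by
    rw [Finset.mem_range]; omega
  apply Finset.prod_eq_zero hjr
  have h3 : (j:ℝ) = -(n:ℝ) - 1 := by exact_mod_cast hj2
  rw [h3]; ring

lemma izf_fact (k : ℕ) : izf 0 k = (Nat.factorial k : ℝ) := by
  induction k with
  | zero => simp [izf]
  | succ k ih => rw [izf_succ, ih]; push_cast [Nat.factorial_succ]; ring

lemma dP_iter (A : Coeffs N) (k : ℕ) (n : ℤ) (x : Fin N → ℝ) :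
    (dP^[k] A) n x = izf n k * A (n + k) x := by
  induction k generalizing A with
  | zero => simp [izf_zero]
  | succ k ih =>
    rw [Function.iterate_succ_apply, ih (dP A)]
    simp only [dP]
    rw [izf_succ]
    push_cast
    have : n + (k:ℤ) + 1 = n + ((k:ℤ)+1) := by ring
    rw [this]
    ring

-- upper bound on support
def UB (A : Coeffs N) (m : ℤ) : Prop := ∀ n : ℤ, m < n → A n = 0

lemma UB.mono {A : Coeffs N} {m m' : ℤ} (h : UB A m) (hm : m ≤ m') : UB A m' :=
  fun n hn => h n (lt_of_le_of_lt hm hn)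

lemma ub_dP {A : Coeffs N} {m : ℤ} (h : UB A m) : UB (dP A) m := by
  intro n hn; funext x; simp [DMKP.dP, h (n+1) (by omega)]

lemma ub_dP_iter {A : Coeffs N} {m : ℤ} (h : UB A m) (k : ℕ) : UB (dP^[k] A) m := by
  induction k with
  | zero => simpa
  | succ k ih => rw [Function.iterate_succ_apply']; exact ub_dP ih

lemma ub_pd {A : Coeffs N} {m : ℤ} (h : UB A m) (q : Fin N) :
    UB (fun n => pd q (A n)) m := by
  intro n hn
  show pd q (A n) = 0
  rw [h n hn]
  funext x; simp only [DMKP.pd]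
  rw [show (0 : (Fin N → ℝ) → ℝ) = fun _ => (0:ℝ) from rfl]
  simp

lemma mul_eq_sum {A B : Coeffs N} {a b : ℤ} (hA : UB A a) (hB : UB B b) (n : ℤ)
    (x : Fin N → ℝ) :
    mul A B n x = ∑ i ∈ Finset.Icc (n - b) a, A i x * B (n - i) x := by
  apply tsum_eq_sum
  intro i hi
  rw [Finset.mem_Icc] at hi
  push_neg at hi
  by_cases h : a < i
  · rw [hA i h]; simp
  · rw [hB (n - i) (by omega)]; simp

lemma ub_mul {A B : Coeffs N} {a b : ℤ} (hA : UB A a) (hB : UB B b) :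
    UB (mul A B) (a + b) := by
  intro n hn; funext x
  rw [mul_eq_sum hA hB]
  apply Finset.sum_eq_zero
  intro i hi
  rw [Finset.mem_Icc] at hi
  rw [hB (n - i) (by omega)]; simp

lemma expAdNeg_eq_sum [NeZero N] {A : Coeffs N} {m : ℤ} (hA : UB A m)
    (φ : (Fin N → ℝ) → ℝ) {n : ℤ} {K : ℕ} (hK : m < n + K) (x : Fin N → ℝ) :
    expAdNeg φ A n x
      = ∑ k ∈ Finset.range K, (pd 0 φ x) ^ k / (Nat.factorial k : ℝ) * (izf n k * A (n + k) x) := by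
  rw [expAdNeg]
  rw [show (fun k : ℕ => (pd 0 φ x) ^ k / (Nat.factorial k : ℝ) * (dP^[k] A) n x)
    = fun k : ℕ => (pd 0 φ x) ^ k / (Nat.factorial k : ℝ) * (izf n k * A (n + k) x) from
      funext fun k => by rw [dP_iter]]
  apply tsum_eq_sum
  intro k hk
  rw [Finset.mem_range] at hk; push_neg at hk
  rw [hA (n + k) (by omega)]
  simp

lemma expAdPos_eq_sum [NeZero N] {A : Coeffs N} {m : ℤ} (hA : UB A m)
    (φ : (Fin N → ℝ) → ℝ) {n : ℤ} {K : ℕ} (hK : m < n + K) (x : Fin N → ℝ) :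
    expAdPos φ A n x
      = ∑ k ∈ Finset.range K, (-(pd 0 φ x)) ^ k / (Nat.factorial k : ℝ) * (izf n k * A (n + k) x) := by
  rw [expAdPos]
  rw [show (fun k : ℕ => (-(pd 0 φ x)) ^ k / (Nat.factorial k : ℝ) * (dP^[k] A) n x)
    = fun k : ℕ => (-(pd 0 φ x)) ^ k / (Nat.factorial k : ℝ) * (izf n k * A (n + k) x) from
      funext fun k => by rw [dP_iter]]
  apply tsum_eq_sum
  intro k hk
  rw [Finset.mem_range] at hk; push_neg at hk
  rw [hA (n + k) (by omega)]
  simp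

lemma ub_expAdNeg [NeZero N] {A : Coeffs N} {m : ℤ} (hA : UB A m)
    (φ : (Fin N → ℝ) → ℝ) : UB (expAdNeg φ A) m := by
  intro n hn; funext x
  rw [expAdNeg_eq_sum hA φ (K := 0) (by omega)]
  simp

lemma ub_expAdPos [NeZero N] {A : Coeffs N} {m : ℤ} (hA : UB A m)
    (φ : (Fin N → ℝ) → ℝ) : UB (expAdPos φ A) m := by
  intro n hn; funext x
  rw [expAdPos_eq_sum hA φ (K := 0) (by omega)]
  simp


-- ### Chunk 3: smoothness closure and derivative lemmas

/-- canonical K for expansion -/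
def Kof (m n : ℤ) : ℕ := (m - n).toNat + 1

lemma Kof_lt (m n : ℤ) : m < n + Kof m n := by
  simp only [Kof]; omega

lemma Kof_lt' (m n : ℤ) : m - 1 < n + ((m - n).toNat : ℤ) := by omega

lemma smooth_expAdNeg [NeZero N] {A : Coeffs N} {m : ℤ} (hA : UB A m)
    (sA : SmoothCoeffs A) {φ : (Fin N → ℝ) → ℝ} (hφ : ContDiff ℝ (⊤ : ℕ∞) φ) :
    SmoothCoeffs (expAdNeg φ A) := by
  intro n
  have h : expAdNeg φ A n = fun x => ∑ k ∈ Finset.range (Kof m n),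
      (pd 0 φ x) ^ k / (Nat.factorial k : ℝ) * (izf n k * A (n + k) x) :=
    funext fun x => expAdNeg_eq_sum hA φ (Kof_lt m n) x
  rw [h]
  apply ContDiff.sum
  intro k _
  exact (((smooth_pd hφ 0).pow k).div_const _).mul (contDiff_const.mul (sA (n + k)))

lemma smooth_dP {A : Coeffs N} (sA : SmoothCoeffs A) : SmoothCoeffs (dP A) := by
  intro n; exact contDiff_const.mul (sA (n + 1))

lemma smooth_dX {A : Coeffs N} (sA : SmoothCoeffs A) (q : Fin N) :
    SmoothCoeffs (fun n => pd q (A n)) := fun n => smooth_pd (sA n) q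

lemma smooth_mul {A B : Coeffs N} {a b : ℤ} (hA : UB A a) (hB : UB B b)
    (sA : SmoothCoeffs A) (sB : SmoothCoeffs B) : SmoothCoeffs (mul A B) := by
  intro n
  have h : mul A B n = fun x => ∑ i ∈ Finset.Icc (n - b) a, A i x * B (n - i) x :=
    funext fun x => mul_eq_sum hA hB n x
  rw [h]
  exact ContDiff.sum fun i _ => (sA i).mul (sB (n - i))

lemma smooth_truncGe {A : Coeffs N} (sA : SmoothCoeffs A) (k : ℤ) :
    SmoothCoeffs (truncGe k A) := by
  intro n
  by_cases h : k ≤ n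
  · simp only [truncGe, if_pos h]; exact sA n
  · simp only [truncGe, if_neg h]; exact contDiff_const

lemma ub_truncGe {A : Coeffs N} {m : ℤ} (hA : UB A m) (k : ℤ) : UB (truncGe k A) m := by
  intro n hn; unfold truncGe; rw [hA n hn]; simp

lemma ub_dP_sharp {A : Coeffs N} {m : ℤ} (hA : UB A m) : UB (dP A) (m - 1) := by
  intro j hj; funext y; simp only [DMKP.dP]; rw [hA (j+1) (by omega)]
  simp

lemma ub_dP_iter_sharp {A : Coeffs N} {m : ℤ} (hA : UB A m) (k : ℕ) :
    UB (dP^[k] A) (m - k) := by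
  intro n hn; funext x
  rw [dP_iter, hA (n + k) (by omega)]
  simp

-- dP commutes with expAdNeg
lemma dP_expAdNeg [NeZero N] {A : Coeffs N} {m : ℤ} (hA : UB A m)
    (φ : (Fin N → ℝ) → ℝ) (n : ℤ) (x : Fin N → ℝ) :
    dP (expAdNeg φ A) n x = expAdNeg φ (dP A) n x := by
  rw [show dP (expAdNeg φ A) n x = ((n+1 : ℤ):ℝ) * expAdNeg φ A (n+1) x from rfl,
    expAdNeg_eq_sum hA φ (n := n+1) (K := Kof m (n+1)) (Kof_lt m (n+1)) x,
    expAdNeg_eq_sum (ub_dP_sharp hA) φ (n := n) (K := Kof m (n+1))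
      (by have := Kof_lt m (n+1); omega) x,
    Finset.mul_sum]
  set_option linter.unusedTactic false in
  apply Finset.sum_congr rfl
  intro k _
  have h1 : dP A (n + k) x = ((n + k + 1 : ℤ):ℝ) * A (n + k + 1) x := rfl
  have h4 : (n : ℤ) + 1 + k = n + k + 1 := by ring
  have h5 : ((n:ℝ)+1) * izf (n+1) k = izf n k * ((n:ℝ)+k+1) := by
    rw [← izf_succ', izf_succ]
  rw [h1, h4]
  push_cast at h5 ⊢
  linear_combination (pd 0 φ x ^ k / (Nat.factorial k : ℝ) * A (n + k + 1) x) * h5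

-- dX of expAdNeg
lemma dX_expAdNeg [NeZero N] {A : Coeffs N} {m : ℤ} (hA : UB A m)
    (sA : SmoothCoeffs A) {φ : (Fin N → ℝ) → ℝ} (hφ : ContDiff ℝ (⊤ : ℕ∞) φ)
    (n : ℤ) (x : Fin N → ℝ) :
    pd 0 (expAdNeg φ A n) x
      = expAdNeg φ (fun j => pd 0 (A j)) n x
        + pd 0 (pd 0 φ) x * expAdNeg φ (dP A) n x := by
  classical
  have hvd : Differentiable ℝ (pd 0 φ) := (smooth_pd hφ 0).differentiable (by simp)
  have hrw : expAdNeg φ A n = fun y => ∑ k ∈ Finset.range (Kof m n),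
      (Nat.factorial k : ℝ)⁻¹ * pd 0 φ y ^ k * (izf n k * A (n + k) y) := by
    funext y
    rw [expAdNeg_eq_sum hA φ (Kof_lt m n) y]
    apply Finset.sum_congr rfl; intro k _; rw [div_eq_inv_mul]
  rw [hrw]
  rw [pd_sum 0 _ _ (fun k _ =>
      ((differentiable_const _).fun_mul (hvd.fun_pow k)).fun_mul
        ((differentiable_const _).fun_mul (((sA (n+k)).differentiable (by simp)))))]
  have hterm : ∀ k ∈ Finset.range (Kof m n),
      pd 0 (fun y => (Nat.factorial k : ℝ)⁻¹ * pd 0 φ y ^ k * (izf n k * A (n + k) y)) x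
      = (Nat.factorial k : ℝ)⁻¹ * ((k:ℝ) * pd 0 φ x ^ (k-1) * pd 0 (pd 0 φ) x) * (izf n k * A (n+k) x)
        + (Nat.factorial k : ℝ)⁻¹ * pd 0 φ x ^ k * (izf n k * pd 0 (A (n+k)) x) := by
    intro k _
    rw [pd_mul 0 ((differentiable_const _).fun_mul (hvd.fun_pow k))
      ((differentiable_const _).fun_mul ((sA (n+k)).differentiable (by simp)))]
    have h1 : pd 0 (fun y => (Nat.factorial k : ℝ)⁻¹ * pd 0 φ y ^ k) x
        = (Nat.factorial k : ℝ)⁻¹ * ((k:ℝ) * pd 0 φ x ^ (k-1) * pd 0 (pd 0 φ) x) := by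
      rw [pd_smul 0 _ (hvd.fun_pow k), pd_pow 0 hvd]
    have h2 : pd 0 (fun y => izf n k * A (n + k) y) x = izf n k * pd 0 (A (n+k)) x :=
      pd_smul 0 _ ((sA (n+k)).differentiable (by simp)) x
    rw [h1, h2]
  rw [Finset.sum_congr rfl hterm, Finset.sum_add_distrib]
  have hsum2 : ∑ k ∈ Finset.range (Kof m n),
      (Nat.factorial k : ℝ)⁻¹ * pd 0 φ x ^ k * (izf n k * pd 0 (A (n+k)) x)
      = expAdNeg φ (fun j => pd 0 (A j)) n x := by
    rw [expAdNeg_eq_sum (ub_pd hA 0) φ (n := n) (K := Kof m n) (Kof_lt m n) x]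
    apply Finset.sum_congr rfl; intro k _; rw [div_eq_inv_mul]
  have hsum1 : ∑ k ∈ Finset.range (Kof m n),
      (Nat.factorial k : ℝ)⁻¹ * ((k:ℝ) * pd 0 φ x ^ (k-1) * pd 0 (pd 0 φ) x) * (izf n k * A (n+k) x)
      = pd 0 (pd 0 φ) x * expAdNeg φ (dP A) n x := by
    have hKof : Kof m n = (m - n).toNat + 1 := rfl
    rw [hKof, Finset.sum_range_succ']
    simp only [Nat.cast_zero, zero_mul, mul_zero, zero_add, Nat.factorial_zero,
      Nat.cast_one, inv_one, pow_zero, add_zero]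
    rw [expAdNeg_eq_sum (ub_dP_sharp hA) φ (n := n) (K := (m - n).toNat) (Kof_lt' m n) x,
      Finset.mul_sum]
    apply Finset.sum_congr rfl
    intro k _
    have h1 : dP A (n + k) x = ((n + k + 1 : ℤ):ℝ) * A (n + k + 1) x := rfl
    have h2 : izf n (k + 1) = izf n k * ((n:ℝ) + k + 1) := izf_succ n k
    have h3 : (n : ℤ) + (k + 1 : ℕ) = n + k + 1 := by push_cast; ring
    have h4 : ((k+1 : ℕ).factorial : ℝ) = ((k:ℝ) + 1) * (Nat.factorial k : ℝ) := by
      rw [Nat.factorial_succ]; push_cast; ring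
    have h5 : (Nat.factorial k : ℝ) ≠ 0 := Nat.cast_ne_zero.mpr (Nat.factorial_ne_zero k)
    rw [h3, h1, h2, h4]
    have h6 : ((k:ℝ) + 1) ≠ 0 := by positivity
    push_cast
    field_simp
  rw [hsum1, hsum2]
  exact add_comm _ _

-- ### Chunk 4: rearrangement, Leibniz, multiplicativity, inverse, morphism

lemma sum_sq_tri (K : ℕ) (f : ℕ → ℕ → ℝ) (hf : ∀ k l, K ≤ k + l → f k l = 0) :
    ∑ k ∈ Finset.range K, ∑ l ∈ Finset.range K, f k l
      = ∑ j ∈ Finset.range K, ∑ i ∈ Finset.range (j+1), f i (j - i) := by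
  classical
  rw [← Finset.sum_product']
  rw [← Finset.sum_filter_add_sum_filter_not (Finset.range K ×ˢ Finset.range K)
      (fun p => p.1 + p.2 < K) (fun p => f p.1 p.2)]
  have h2 : ∑ p ∈ (Finset.range K ×ˢ Finset.range K).filter (fun p => ¬ p.1 + p.2 < K),
      f p.1 p.2 = 0 :=
    Finset.sum_eq_zero (fun p hp => hf p.1 p.2 (by
      rw [Finset.mem_filter] at hp; omega))
  rw [h2, add_zero, Finset.sum_sigma']
  refine Finset.sum_nbij' (fun (p : ℕ × ℕ) => (⟨p.1 + p.2, p.1⟩ : Σ _ : ℕ, ℕ))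
    (fun (s : Σ _ : ℕ, ℕ) => ((s.2, s.1 - s.2) : ℕ × ℕ)) ?_ ?_ ?_ ?_ ?_
  · intro p hp
    simp only [Finset.mem_filter, Finset.mem_product, Finset.mem_range] at hp
    simp only [Finset.mem_sigma, Finset.mem_range]
    omega
  · intro s hs
    simp only [Finset.mem_sigma, Finset.mem_range] at hs
    simp only [Finset.mem_filter, Finset.mem_product, Finset.mem_range]
    omega
  · rintro ⟨p, q⟩ hp
    simp only [Finset.mem_filter, Finset.mem_product, Finset.mem_range] at hp
    simp only []
    rw [show p + q - p = q from by omega]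
  · rintro ⟨p, q⟩ hp
    simp only [Finset.mem_sigma, Finset.mem_range] at hp
    simp only []
    rw [show q + (p - q) = p from by omega]
  · rintro ⟨p, q⟩ hp
    simp only [Finset.mem_filter, Finset.mem_product, Finset.mem_range] at hp
    simp only []
    rw [show p + q - p = q from by omega]

lemma dP_mul {A B : Coeffs N} {a b : ℤ} (hA : UB A a) (hB : UB B b) (n : ℤ)
    (x : Fin N → ℝ) :
    dP (mul A B) n x = mul (dP A) B n x + mul A (dP B) n x := by
  classical
  have hAx : ∀ i, a < i → A i x = 0 := fun i h => by rw [hA i h]; rfl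
  have hBx : ∀ i, b < i → B i x = 0 := fun i h => by rw [hB i h]; rfl
  have e1 : mul A B (n+1) x = ∑ i ∈ Finset.Icc (n-b-1) (a+2), A i x * B (n+1-i) x := by
    apply tsum_eq_sum
    intro i hi
    rw [Finset.mem_Icc] at hi; push_neg at hi
    by_cases h : a < i
    · rw [hAx i h]; ring
    · rw [hBx (n+1-i) (by omega)]; ring
  have e2 : mul (dP A) B n x = ∑ i ∈ Finset.Icc (n-b-1) (a+2), dP A i x * B (n-i) x := by
    apply tsum_eq_sum
    intro i hi
    rw [Finset.mem_Icc] at hi; push_neg at hi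
    by_cases h : a < i
    · show ((i+1:ℤ):ℝ) * A (i+1) x * B (n-i) x = 0
      rw [hAx (i+1) (by omega)]; ring
    · rw [hBx (n-i) (by omega)]; ring
  have e3 : mul A (dP B) n x = ∑ i ∈ Finset.Icc (n-b-1) (a+2), A i x * dP B (n-i) x := by
    apply tsum_eq_sum
    intro i hi
    rw [Finset.mem_Icc] at hi; push_neg at hi
    by_cases h : a < i
    · rw [hAx i h]; ring
    · show A i x * (((n-i+1:ℤ):ℝ) * B (n-i+1) x) = 0
      rw [hBx (n-i+1) (by omega)]; ring
  rw [show dP (mul A B) n x = ((n+1:ℤ):ℝ) * mul A B (n+1) x from rfl, e1, e2, e3]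
  -- shift the middle sum
  have e4 : ∑ i ∈ Finset.Icc (n-b-1) (a+2), dP A i x * B (n-i) x
      = ∑ i ∈ Finset.Icc (n-b) (a+3), (i:ℝ) * A i x * B (n+1-i) x := by
    have hmap : (Finset.Icc (n-b) (a+3) : Finset ℤ)
        = (Finset.Icc (n-b-1) (a+2)).map (addRightEmbedding (1:ℤ)) := by
      rw [Finset.map_add_right_Icc]; congr 1 <;> ring
    rw [hmap, Finset.sum_map]
    apply Finset.sum_congr rfl
    intro i _
    simp only [addRightEmbedding_apply]
    rw [show (n+1-(i+1) : ℤ) = n - i by ring]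
    show ((i+1:ℤ):ℝ) * A (i+1) x * B (n-i) x = ((i+1:ℤ):ℝ) * A (i+1) x * B (n-i) x
    rfl
  rw [e4]
  -- align both to the interval Icc (n-b-1) (a+3)
  have e5 : ∑ i ∈ Finset.Icc (n-b) (a+3), (i:ℝ) * A i x * B (n+1-i) x
      = ∑ i ∈ Finset.Icc (n-b-1) (a+3), (i:ℝ) * A i x * B (n+1-i) x := by
    apply Finset.sum_subset (Finset.Icc_subset_Icc (show n-b-1 ≤ n-b by omega) le_rfl)
    intro i hi hni
    rw [Finset.mem_Icc] at hi; rw [Finset.mem_Icc] at hni; push_neg at hni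
    rw [hBx (n+1-i) (by omega)]; ring
  have e6 : ((n+1:ℤ):ℝ) * ∑ i ∈ Finset.Icc (n-b-1) (a+2), A i x * B (n+1-i) x
      = ∑ i ∈ Finset.Icc (n-b-1) (a+3), ((n+1:ℤ):ℝ) * (A i x * B (n+1-i) x) := by
    rw [Finset.mul_sum]
    apply Finset.sum_subset (Finset.Icc_subset_Icc le_rfl (show (a+2:ℤ) ≤ a+3 by omega))
    intro i hi hni
    rw [Finset.mem_Icc] at hi; rw [Finset.mem_Icc] at hni; push_neg at hni
    rw [hAx i (by omega)]; ring
  have e7 : ∑ i ∈ Finset.Icc (n-b-1) (a+2), A i x * dP B (n-i) x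
      = ∑ i ∈ Finset.Icc (n-b-1) (a+3), A i x * dP B (n-i) x := by
    apply Finset.sum_subset (Finset.Icc_subset_Icc le_rfl (show (a+2:ℤ) ≤ a+3 by omega))
    intro i hi hni
    rw [Finset.mem_Icc] at hi; rw [Finset.mem_Icc] at hni; push_neg at hni
    rw [hAx i (by omega)]; ring
  rw [e5, e6, e7, ← Finset.sum_add_distrib]
  apply Finset.sum_congr rfl
  intro i _
  show ((n+1:ℤ):ℝ) * (A i x * B (n+1-i) x)
      = (i:ℝ) * A i x * B (n+1-i) x + A i x * (((n-i+1:ℤ):ℝ) * B (n-i+1) x)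
  rw [show (n-i+1 : ℤ) = n+1-i by ring]
  push_cast
  ring

lemma dP_iter_mul {A B : Coeffs N} {a b : ℤ} (hA : UB A a) (hB : UB B b) (k : ℕ)
    (n : ℤ) (x : Fin N → ℝ) :
    (dP^[k] (mul A B)) n x
      = ∑ j ∈ Finset.range (k+1),
          (Nat.choose k j : ℝ) * mul (dP^[j] A) (dP^[k-j] B) n x := by
  induction k generalizing n with
  | zero => simp
  | succ k ih =>
    rw [Function.iterate_succ_apply',
      show dP (dP^[k] (mul A B)) n x = ((n+1:ℤ):ℝ) * (dP^[k] (mul A B)) (n+1) x from rfl,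
      ih (n+1), Finset.mul_sum]
    have hstep : ∀ j ∈ Finset.range (k+1),
        ((n+1:ℤ):ℝ) * ((Nat.choose k j : ℝ) * mul (dP^[j] A) (dP^[k-j] B) (n+1) x)
        = (Nat.choose k j : ℝ) * (mul (dP^[j+1] A) (dP^[k-j] B) n x
            + mul (dP^[j] A) (dP^[k-j+1] B) n x) := by
      intro j _
      have h := dP_mul (ub_dP_iter hA j) (ub_dP_iter hB (k-j)) n x
      rw [show dP (mul (dP^[j] A) (dP^[k-j] B)) n x
          = ((n+1:ℤ):ℝ) * (mul (dP^[j] A) (dP^[k-j] B)) (n+1) x from rfl] at h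
      rw [Function.iterate_succ_apply' dP j A, Function.iterate_succ_apply' dP (k-j) B, ← h]
      ring
    rw [Finset.sum_congr rfl hstep]
    -- Pascal recombination
    have expand : ∀ j ∈ Finset.range (k+1),
        (Nat.choose k j : ℝ) * (mul (dP^[j+1] A) (dP^[k-j] B) n x
            + mul (dP^[j] A) (dP^[k-j+1] B) n x)
        = (Nat.choose k j : ℝ) * mul (dP^[j+1] A) (dP^[k-j] B) n x
          + (Nat.choose k j : ℝ) * mul (dP^[j] A) (dP^[k-j+1] B) n x := fun j _ => by ring
    rw [Finset.sum_congr rfl expand, Finset.sum_add_distrib]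
    -- T j := mul (dP^[j] A) (dP^[k+1-j] B) n x
    set T : ℕ → ℝ := fun j => mul (dP^[j] A) (dP^[k+1-j] B) n x with hT
    have h1 : ∑ j ∈ Finset.range (k+1), (Nat.choose k j : ℝ) * mul (dP^[j+1] A) (dP^[k-j] B) n x
        = ∑ j ∈ Finset.range (k+1), (Nat.choose k j : ℝ) * T (j+1) := by
      apply Finset.sum_congr rfl; intro j hj
      rw [Finset.mem_range] at hj
      have : k + 1 - (j+1) = k - j := by omega
      rw [hT]; simp only [this]
    have h2 : ∑ j ∈ Finset.range (k+1), (Nat.choose k j : ℝ) * mul (dP^[j] A) (dP^[k-j+1] B) n x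
        = ∑ j ∈ Finset.range (k+1), (Nat.choose k j : ℝ) * T j := by
      apply Finset.sum_congr rfl; intro j hj
      rw [Finset.mem_range] at hj
      have : k + 1 - j = k - j + 1 := by omega
      rw [hT]; simp only [this]
    rw [h1, h2]
    have goal' : ∑ j ∈ Finset.range (k+2), (Nat.choose (k+1) j : ℝ) * T j
        = ∑ j ∈ Finset.range (k+1), (Nat.choose k j : ℝ) * T (j+1)
          + ∑ j ∈ Finset.range (k+1), (Nat.choose k j : ℝ) * T j := by
      rw [Finset.sum_range_succ' (fun j => (Nat.choose (k+1) j : ℝ) * T j) (k+1)]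
      have hsplit : ∀ j ∈ Finset.range (k+1),
          (Nat.choose (k+1) (j+1) : ℝ) * T (j+1)
          = (Nat.choose k j : ℝ) * T (j+1) + (Nat.choose k (j+1) : ℝ) * T (j+1) := by
        intro j _
        rw [Nat.choose_succ_succ]
        push_cast; ring
      rw [Finset.sum_congr rfl hsplit, Finset.sum_add_distrib]
      have hre : ∑ j ∈ Finset.range (k+1), (Nat.choose k (j+1) : ℝ) * T (j+1)
          + (Nat.choose (k+1) 0 : ℝ) * T 0
          = ∑ j ∈ Finset.range (k+1), (Nat.choose k j : ℝ) * T j := by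
        rw [Finset.sum_range_succ' (fun j => (Nat.choose k j : ℝ) * T j) k]
        simp only [Nat.choose_zero_right, Nat.cast_one]
        rw [Finset.sum_range_succ]
        simp only [Nat.choose_succ_self, Nat.cast_zero, zero_mul, add_zero]
      linarith [hre]
    exact goal'.symm

-- ### Chunk 5: multiplicativity of expAdNeg, linearity, inverse, morphism

lemma expAdNeg_eq_sum' [NeZero N] {A : Coeffs N} {m : ℤ} (hA : UB A m)
    (φ : (Fin N → ℝ) → ℝ) {n : ℤ} {K : ℕ} (hK : m < n + K) (x : Fin N → ℝ) :
    expAdNeg φ A n x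
      = ∑ k ∈ Finset.range K,
          (pd 0 φ x) ^ k / (Nat.factorial k : ℝ) * (dP^[k] A) n x := by
  rw [expAdNeg_eq_sum hA φ hK x]
  exact Finset.sum_congr rfl fun k _ => by rw [dP_iter]

lemma expAdNeg_mul [NeZero N] {A B : Coeffs N} {a b : ℤ} (hA : UB A a) (hB : UB B b)
    (φ : (Fin N → ℝ) → ℝ) (n : ℤ) (x : Fin N → ℝ) :
    expAdNeg φ (mul A B) n x = mul (expAdNeg φ A) (expAdNeg φ B) n x := by
  classical
  set v : ℝ := pd 0 φ x with hv
  set K : ℕ := Kof (a + b) n with hKdef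
  have hK : a + b < n + K := Kof_lt (a+b) n
  -- the basic double-indexed term
  set g : ℕ → ℕ → ℝ := fun p q =>
    v ^ p / (Nat.factorial p : ℝ) * (v ^ q / (Nat.factorial q : ℝ))
      * mul (dP^[p] A) (dP^[q] B) n x with hg
  have hgvanish : ∀ p q, K ≤ p + q → g p q = 0 := by
    intro p q hpq
    have h0 : mul (dP^[p] A) (dP^[q] B) n = 0 :=
      ub_mul (ub_dP_iter_sharp hA p) (ub_dP_iter_sharp hB q) n (by omega)
    have hx0 : mul (dP^[p] A) (dP^[q] B) n x = 0 := by rw [h0]; rfl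
    rw [hg]; dsimp only; rw [hx0]; ring
  -- LHS
  have hlhs : expAdNeg φ (mul A B) n x
      = ∑ k ∈ Finset.range K, ∑ j ∈ Finset.range (k+1), g j (k - j) := by
    rw [expAdNeg_eq_sum' (ub_mul hA hB) φ (show a + b < n + K from hK) x]
    apply Finset.sum_congr rfl
    intro k _
    rw [dP_iter_mul hA hB k n x, Finset.mul_sum]
    apply Finset.sum_congr rfl
    intro j hj
    rw [Finset.mem_range] at hj
    have hjk : j ≤ k := by omega
    rw [hg]
    dsimp only
    have hsplit : v ^ k = v ^ j * v ^ (k - j) := by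
      rw [← pow_add]; congr 1; omega
    have hfactnat : Nat.choose k j * (Nat.factorial j * Nat.factorial (k-j))
        = Nat.factorial k := by
      rw [← Nat.choose_mul_factorial_mul_factorial hjk]; ring
    have hj' : (Nat.factorial j : ℝ) ≠ 0 := by positivity
    have hkj' : (Nat.factorial (k-j) : ℝ) ≠ 0 := by positivity
    have hk' : (Nat.factorial k : ℝ) ≠ 0 := by positivity
    rw [hsplit, show ((Nat.choose k j : ℝ))
        = (Nat.factorial k : ℝ) / ((Nat.factorial j : ℝ) * (Nat.factorial (k-j) : ℝ)) from by
      rw [eq_div_iff (by positivity)]; exact_mod_cast hfactnat]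
    field_simp
  -- RHS
  have hrhs : mul (expAdNeg φ A) (expAdNeg φ B) n x
      = ∑ p ∈ Finset.range K, ∑ q ∈ Finset.range K, g p q := by
    rw [mul_eq_sum (ub_expAdNeg hA φ) (ub_expAdNeg hB φ) n x]
    have hstep : ∀ i ∈ Finset.Icc (n - b) a,
        expAdNeg φ A i x * expAdNeg φ B (n - i) x
          = ∑ p ∈ Finset.range K, ∑ q ∈ Finset.range K,
              (v ^ p / (Nat.factorial p : ℝ) * (izf i p * A (i + p) x))
                * (v ^ q / (Nat.factorial q : ℝ) * (izf (n-i) q * B (n - i + q) x)) := by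
      intro i hi
      rw [Finset.mem_Icc] at hi
      rw [expAdNeg_eq_sum hA φ (show a < i + K by omega) x,
        expAdNeg_eq_sum hB φ (show b < (n - i) + K by omega) x,
        Finset.sum_mul_sum]
    rw [Finset.sum_congr rfl hstep]
    rw [Finset.sum_comm]
    apply Finset.sum_congr rfl
    intro p _
    rw [Finset.sum_comm]
    apply Finset.sum_congr rfl
    intro q _
    rw [hg]
    dsimp only
    rw [mul_eq_sum (ub_dP_iter hA p) (ub_dP_iter hB q) n x, Finset.mul_sum]
    apply Finset.sum_congr rfl
    intro i _
    rw [dP_iter, dP_iter]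
    ring
  rw [hlhs, hrhs, sum_sq_tri K g hgvanish]

lemma expAdNeg_sub [NeZero N] {U V W : Coeffs N} {u w : ℤ} (hU : UB U u) (hV : UB V w)
    (hW : ∀ j y, W j y = U j y - V j y) (φ : (Fin N → ℝ) → ℝ) (n : ℤ) (x : Fin N → ℝ) :
    expAdNeg φ W n x = expAdNeg φ U n x - expAdNeg φ V n x := by
  have hWub : UB W (max u w) := by
    intro j hj; funext y
    rw [hW j y, hU j (lt_of_le_of_lt (le_max_left u w) hj),
      hV j (lt_of_le_of_lt (le_max_right u w) hj)]
    show (0:ℝ) - 0 = 0; ring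
  have hK := Kof_lt (max u w) n
  rw [expAdNeg_eq_sum hWub φ hK x,
    expAdNeg_eq_sum hU φ (lt_of_le_of_lt (le_max_left u w) hK) x,
    expAdNeg_eq_sum hV φ (lt_of_le_of_lt (le_max_right u w) hK) x,
    ← Finset.sum_sub_distrib]
  apply Finset.sum_congr rfl
  intro k _
  rw [hW]
  ring

lemma expAdNeg_add [NeZero N] {U V W : Coeffs N} {u w : ℤ} (hU : UB U u) (hV : UB V w)
    (hW : ∀ j y, W j y = U j y + V j y) (φ : (Fin N → ℝ) → ℝ) (n : ℤ) (x : Fin N → ℝ) :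
    expAdNeg φ W n x = expAdNeg φ U n x + expAdNeg φ V n x := by
  have hWub : UB W (max u w) := by
    intro j hj; funext y
    rw [hW j y, hU j (lt_of_le_of_lt (le_max_left u w) hj),
      hV j (lt_of_le_of_lt (le_max_right u w) hj)]
    show (0:ℝ) + 0 = 0; ring
  have hK := Kof_lt (max u w) n
  rw [expAdNeg_eq_sum hWub φ hK x,
    expAdNeg_eq_sum hU φ (lt_of_le_of_lt (le_max_left u w) hK) x,
    expAdNeg_eq_sum hV φ (lt_of_le_of_lt (le_max_right u w) hK) x,
    ← Finset.sum_add_distrib]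
  apply Finset.sum_congr rfl
  intro k _
  rw [hW]
  ring

lemma expAdPos_add [NeZero N] {U V W : Coeffs N} {u w : ℤ} (hU : UB U u) (hV : UB V w)
    (hW : ∀ j y, W j y = U j y + V j y) (φ : (Fin N → ℝ) → ℝ) (n : ℤ) (x : Fin N → ℝ) :
    expAdPos φ W n x = expAdPos φ U n x + expAdPos φ V n x := by
  have hWub : UB W (max u w) := by
    intro j hj; funext y
    rw [hW j y, hU j (lt_of_le_of_lt (le_max_left u w) hj),
      hV j (lt_of_le_of_lt (le_max_right u w) hj)]
    show (0:ℝ) + 0 = 0; ring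
  have hK := Kof_lt (max u w) n
  rw [expAdPos_eq_sum hWub φ hK x,
    expAdPos_eq_sum hU φ (lt_of_le_of_lt (le_max_left u w) hK) x,
    expAdPos_eq_sum hV φ (lt_of_le_of_lt (le_max_right u w) hK) x,
    ← Finset.sum_add_distrib]
  apply Finset.sum_congr rfl
  intro k _
  rw [hW]
  ring

lemma expAdPos_expAdNeg [NeZero N] {A : Coeffs N} {m : ℤ} (hA : UB A m)
    (φ : (Fin N → ℝ) → ℝ) (n : ℤ) (x : Fin N → ℝ) :
    expAdPos φ (expAdNeg φ A) n x = A n x := by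
  classical
  set v : ℝ := pd 0 φ x with hv
  set K : ℕ := Kof m n with hKdef
  have hK : m < n + K := Kof_lt m n
  set f : ℕ → ℕ → ℝ := fun k l =>
    (-v) ^ k / (Nat.factorial k : ℝ) * (izf n k
      * ((v:ℝ) ^ l / (Nat.factorial l : ℝ) * (izf (n + k) l * A (n + k + l) x))) with hf
  have hexp : expAdPos φ (expAdNeg φ A) n x
      = ∑ k ∈ Finset.range K, ∑ l ∈ Finset.range K, f k l := by
    rw [expAdPos_eq_sum (ub_expAdNeg hA φ) φ hK x]
    apply Finset.sum_congr rfl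
    intro k _
    rw [expAdNeg_eq_sum hA φ (show m < (n + (k:ℤ)) + K by omega) x, Finset.mul_sum,
      Finset.mul_sum]
  have hvanish : ∀ k l, K ≤ k + l → f k l = 0 := by
    intro k l hkl
    have : A (n + k + l) = 0 := hA _ (by omega)
    have hx : A (n + k + l) x = 0 := by rw [this]; rfl
    rw [hf]; dsimp only; rw [hx]; ring
  rw [hexp, sum_sq_tri K f hvanish]
  have hKsucc : K = ((m - n).toNat) + 1 := rfl
  have hdiag : ∀ j ∈ Finset.range K, ∑ i ∈ Finset.range (j+1), f i (j - i)
      = (if j = 0 then A n x else 0) := by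
    intro j _
    have hterm : ∀ i ∈ Finset.range (j+1), f i (j - i)
        = ((-1:ℝ)^i * (Nat.choose j i : ℝ))
            * (v ^ j * izf n j * A (n + j) x / (Nat.factorial j : ℝ)) := by
      intro i hi
      rw [Finset.mem_range] at hi
      have hij : i ≤ j := by omega
      rw [hf]
      dsimp only
      have h2 : n + (i:ℤ) + ((j-i:ℕ):ℤ) = n + j := by omega
      have h3 : izf n i * izf (n + i) (j - i) = izf n j := by
        rw [← izf_add]; congr 1; omega
      have h4 : (-v) ^ i = (-1:ℝ)^i * v^i := by rw [neg_pow]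
      have h5 : v ^ i * v ^ (j - i) = v ^ j := by rw [← pow_add]; congr 1; omega
      have hfactnat : Nat.choose j i * (Nat.factorial i * Nat.factorial (j-i))
          = Nat.factorial j := by
        rw [← Nat.choose_mul_factorial_mul_factorial hij]; ring
      have hi' : (Nat.factorial i : ℝ) ≠ 0 := by positivity
      have hji' : (Nat.factorial (j-i) : ℝ) ≠ 0 := by positivity
      have hj' : (Nat.factorial j : ℝ) ≠ 0 := by positivity
      rw [h2, h4, show ((Nat.choose j i : ℝ))
          = (Nat.factorial j : ℝ) / ((Nat.factorial i : ℝ) * (Nat.factorial (j-i) : ℝ)) from by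
        rw [eq_div_iff (by positivity)]; exact_mod_cast hfactnat,
        ← h3, ← h5]
      field_simp
    rw [Finset.sum_congr rfl hterm, ← Finset.sum_mul]
    have halt : ∑ i ∈ Finset.range (j+1), ((-1:ℝ)^i * (Nat.choose j i : ℝ))
        = if j = 0 then 1 else 0 := by
      have := Int.alternating_sum_range_choose (n := j)
      have hcast : ((∑ i ∈ Finset.range (j+1), (-1:ℤ)^i * (Nat.choose j i : ℤ) : ℤ) : ℝ)
          = ∑ i ∈ Finset.range (j+1), ((-1:ℝ)^i * (Nat.choose j i : ℝ)) := by
        push_cast; rfl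
      rw [← hcast, this]
      split <;> simp
    rw [halt]
    by_cases hj : j = 0
    · subst hj
      simp [izf_zero]
    · simp [hj]
  rw [Finset.sum_congr rfl hdiag, hKsucc, Finset.sum_range_succ']
  simp

-- ### Chunk 6: mul helpers, Poisson bracket morphism

lemma mul_single_right (F : Coeffs N) (h : (Fin N → ℝ) → ℝ) (c n : ℤ) (x : Fin N → ℝ) :
    mul F (fun j => fun y => if j = c then h y else 0) n x = F (n - c) x * h x := by
  unfold mul
  rw [tsum_eq_single (n - c)]
  · simp
  · intro i hi
    have : ¬ (n - i = c) := by omega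
    simp [this]

lemma mul_single_left (F : Coeffs N) (h : (Fin N → ℝ) → ℝ) (c n : ℤ) (x : Fin N → ℝ) :
    mul (fun j => fun y => if j = c then h y else 0) F n x = h x * F (n - c) x := by
  unfold mul
  rw [tsum_eq_single c]
  · simp
  · intro i hi
    simp [hi]

lemma mul_comm' (A B : Coeffs N) (n : ℤ) (x : Fin N → ℝ) :
    mul A B n x = mul B A n x := by
  unfold mul
  rw [← Equiv.tsum_eq (Equiv.subLeft n) (fun i => A i x * B (n - i) x)]
  apply tsum_congr
  intro i
  simp only [Equiv.subLeft_apply]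
  rw [show n - (n - i) = i from by ring]
  ring

lemma ub_apply {A : Coeffs N} {m : ℤ} (h : UB A m) {n : ℤ} (hn : m < n)
    (x : Fin N → ℝ) : A n x = 0 := by rw [h n hn]; rfl

lemma mul_add_right {F G H : Coeffs N} {f g : ℤ} (hF : UB F f) (hG : UB G g)
    (hH : UB H g) (n : ℤ) (x : Fin N → ℝ) :
    mul F (fun j y => G j y + H j y) n x = mul F G n x + mul F H n x := by
  have hGH : UB (fun j y => G j y + H j y) g := by
    intro j hj; funext y
    show G j y + H j y = 0
    rw [ub_apply hG hj y, ub_apply hH hj y]; ring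
  rw [mul_eq_sum hF hGH n x, mul_eq_sum hF hG n x, mul_eq_sum hF hH n x,
    ← Finset.sum_add_distrib]
  apply Finset.sum_congr rfl
  intro i _
  ring

lemma mul_addsmul_right {F G H : Coeffs N} {f g : ℤ} (hF : UB F f) (hG : UB G g)
    (hH : UB H g) (w : (Fin N → ℝ) → ℝ) (n : ℤ) (x : Fin N → ℝ) :
    mul F (fun j y => G j y + w y * H j y) n x = mul F G n x + w x * mul F H n x := by
  have hGH : UB (fun j y => G j y + w y * H j y) g := by
    intro j hj; funext y
    show G j y + w y * H j y = 0
    rw [ub_apply hG hj y, ub_apply hH hj y]; ring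
  rw [mul_eq_sum hF hGH n x, mul_eq_sum hF hG n x, mul_eq_sum hF hH n x, Finset.mul_sum,
    ← Finset.sum_add_distrib]
  apply Finset.sum_congr rfl
  intro i _
  ring

lemma mul_addsmul_left {F G H : Coeffs N} {f g : ℤ} (hF : UB F f) (hG : UB G g)
    (hH : UB H g) (w : (Fin N → ℝ) → ℝ) (n : ℤ) (x : Fin N → ℝ) :
    mul (fun j y => G j y + w y * H j y) F n x = mul G F n x + w x * mul H F n x := by
  rw [mul_comm' _ F, mul_comm' G F, mul_comm' H F]
  exact mul_addsmul_right hF hG hH w n x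

/-- The Poisson bracket morphism property of `e^{-ad φ}`. -/
lemma expAdNeg_pb [NeZero N] {S T : Coeffs N} {s t : ℤ} (hS : UB S s) (hT : UB T t)
    (sS : SmoothCoeffs S) (sT : SmoothCoeffs T) {φ : (Fin N → ℝ) → ℝ}
    (hφ : ContDiff ℝ (⊤ : ℕ∞) φ) (n : ℤ) (x : Fin N → ℝ) :
    expAdNeg φ (pb S T) n x = pb (expAdNeg φ S) (expAdNeg φ T) n x := by
  have hdPS : dP (expAdNeg φ S) = expAdNeg φ (dP S) :=
    funext fun j => funext fun y => dP_expAdNeg hS φ j y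
  have hdPT : dP (expAdNeg φ T) = expAdNeg φ (dP T) :=
    funext fun j => funext fun y => dP_expAdNeg hT φ j y
  have hdXS : dT (0 : Fin N) (expAdNeg φ S)
      = fun j y => expAdNeg φ (fun i => pd 0 (S i)) j y
          + pd 0 (pd 0 φ) y * expAdNeg φ (dP S) j y :=
    funext fun j => funext fun y => dX_expAdNeg hS sS hφ j y
  have hdXT : dT (0 : Fin N) (expAdNeg φ T)
      = fun j y => expAdNeg φ (fun i => pd 0 (T i)) j y
          + pd 0 (pd 0 φ) y * expAdNeg φ (dP T) j y :=
    funext fun j => funext fun y => dX_expAdNeg hT sT hφ j y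
  have w := pd 0 (pd 0 φ)
  simp only [pb, dX, dT]
  rw [hdPS, hdPT, hdXS, hdXT]
  rw [mul_addsmul_right (ub_expAdNeg (ub_dP hS) φ)
      (ub_expAdNeg (ub_pd hT 0) φ) (ub_expAdNeg (ub_dP hT) φ) _ n x,
    mul_addsmul_left (ub_expAdNeg (ub_dP hT) φ)
      (ub_expAdNeg (ub_pd hS 0) φ) (ub_expAdNeg (ub_dP hS) φ) _ n x]
  have hsub := expAdNeg_sub (W := pb S T) (U := mul (dP S) (fun j => pd 0 (T j)))
      (V := mul (fun j => pd 0 (S j)) (dP T)) (u := s + t) (w := s + t)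
      (ub_mul (ub_dP hS) (ub_pd hT 0)) (ub_mul (ub_pd hS 0) (ub_dP hT))
      (fun j y => rfl) φ n x
  rw [hsub, expAdNeg_mul (B := fun j => pd 0 (T j)) (ub_dP hS) (ub_pd hT 0) φ n x,
    expAdNeg_mul (A := fun j => pd 0 (S j)) (ub_pd hS 0) (ub_dP hT) φ n x]
  ring

-- ### Chunk 7: const, truncation and residue interaction with expAdNeg; pb helpers

lemma const_apply (h : (Fin N → ℝ) → ℝ) (j : ℤ) (y : Fin N → ℝ) :
    const h j y = if j = 0 then h y else 0 := by
  unfold const; split <;> rfl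

lemma ub_const (h : (Fin N → ℝ) → ℝ) : UB (const h) 0 := by
  intro j hj; unfold const; rw [if_neg (by omega)]

lemma dP_const_eq (h : (Fin N → ℝ) → ℝ) : dP (const h) = fun j y => (0:ℝ) := by
  funext j y
  show ((j+1:ℤ):ℝ) * const h (j+1) y = 0
  rw [const_apply]
  by_cases hj : j + 1 = 0
  · rw [if_pos hj, hj]; push_cast; ring
  · rw [if_neg hj]; ring

lemma dT_const_eq [NeZero N] (h : (Fin N → ℝ) → ℝ) :
    dT (0 : Fin N) (const h) = fun j y => if j = 0 then pd 0 h y else 0 := by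
  funext j y
  show pd 0 (const h j) y = _
  by_cases hj : j = 0
  · subst hj; rw [if_pos rfl]; rfl
  · rw [if_neg hj]
    unfold const
    rw [if_neg hj, pd_zero]
    rfl

lemma mul_zero_right (F : Coeffs N) (n : ℤ) (x : Fin N → ℝ) :
    mul F (fun j y => (0:ℝ)) n x = 0 := by
  unfold mul
  have : (fun i : ℤ => F i x * (0:ℝ)) = fun _ => 0 := by funext i; ring
  rw [this, tsum_zero]

lemma mul_zero_left (F : Coeffs N) (n : ℤ) (x : Fin N → ℝ) :
    mul (fun j y => (0:ℝ)) F n x = 0 := by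
  unfold mul
  have : (fun i : ℤ => (0:ℝ) * F (n - i) x) = fun _ => 0 := by funext i; ring
  rw [this, tsum_zero]

lemma pb_const_right [NeZero N] (F : Coeffs N) (h : (Fin N → ℝ) → ℝ) (n : ℤ)
    (x : Fin N → ℝ) : pb F (const h) n x = dP F n x * pd 0 h x := by
  show mul (dP F) (dT 0 (const h)) n x - mul (dT 0 F) (dP (const h)) n x = _
  rw [dT_const_eq, dP_const_eq, mul_zero_right,
    show (fun j y => if j = 0 then pd 0 h y else 0) = (fun j => fun y => if j = (0:ℤ) then pd 0 h y else 0) from rfl,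
    mul_single_right, sub_zero, sub_zero]

lemma pb_const_left [NeZero N] (F : Coeffs N) (h : (Fin N → ℝ) → ℝ) (n : ℤ)
    (x : Fin N → ℝ) : pb (const h) F n x = -(pd 0 h x * dP F n x) := by
  show mul (dP (const h)) (dT 0 F) n x - mul (dT 0 (const h)) (dP F) n x = _
  rw [dT_const_eq, dP_const_eq, mul_zero_left,
    show (fun j y => if j = 0 then pd 0 h y else 0) = (fun j => fun y => if j = (0:ℤ) then pd 0 h y else 0) from rfl,
    mul_single_left, sub_zero, zero_sub]

lemma pb_antisymm [NeZero N] (F G : Coeffs N) (n : ℤ) (x : Fin N → ℝ) :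
    pb F G n x + pb G F n x = 0 := by
  show (mul (dP F) (dT 0 G) n x - mul (dT 0 F) (dP G) n x)
    + (mul (dP G) (dT 0 F) n x - mul (dT 0 G) (dP F) n x) = 0
  rw [mul_comm' (dP G) (dT 0 F), mul_comm' (dT 0 G) (dP F)]
  ring

lemma pb_add_right [NeZero N] {F G H : Coeffs N} {f g h : ℤ} (hF : UB F f)
    (hG : UB G g) (hH : UB H h) (sG : SmoothCoeffs G) (sH : SmoothCoeffs H)
    (n : ℤ) (x : Fin N → ℝ) :
    pb F (fun j y => G j y + H j y) n x = pb F G n x + pb F H n x := by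
  have hG' : UB G (max g h) := hG.mono (le_max_left g h)
  have hH' : UB H (max g h) := hH.mono (le_max_right g h)
  have hdX : dT (0 : Fin N) (fun j y => G j y + H j y)
      = fun j y => pd 0 (G j) y + pd 0 (H j) y := by
    funext j y
    exact pd_add 0 ((sG j).differentiable (by simp)) ((sH j).differentiable (by simp)) y
  have hdP : dP (fun j y => G j y + H j y) = fun j y => dP G j y + dP H j y := by
    funext j y
    show ((j+1:ℤ):ℝ) * (G (j+1) y + H (j+1) y)
      = ((j+1:ℤ):ℝ) * G (j+1) y + ((j+1:ℤ):ℝ) * H (j+1) y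
    ring
  show mul (dP F) (dT 0 (fun j y => G j y + H j y)) n x
      - mul (dT 0 F) (dP (fun j y => G j y + H j y)) n x = _
  rw [hdX, hdP]
  have e1 : mul (dP F) (fun j y => pd 0 (G j) y + pd 0 (H j) y) n x
      = mul (dP F) (fun i => pd 0 (G i)) n x + mul (dP F) (fun i => pd 0 (H i)) n x :=
    mul_add_right (ub_dP hF) (f := f) (g := max g h) (ub_pd hG' 0) (ub_pd hH' 0) n x
  have e2 : mul (dT 0 F) (fun j y => dP G j y + dP H j y) n x
      = mul (dT 0 F) (dP G) n x + mul (dT 0 F) (dP H) n x :=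
    mul_add_right (F := dT 0 F) (ub_pd hF 0) (f := f) (g := max g h)
      (ub_dP hG') (ub_dP hH') n x
  rw [e1, e2]
  show _ = (mul (dP F) (dT 0 G) n x - mul (dT 0 F) (dP G) n x)
    + (mul (dP F) (dT 0 H) n x - mul (dT 0 F) (dP H) n x)
  show (mul (dP F) (fun i => pd 0 (G i)) n x + mul (dP F) (fun i => pd 0 (H i)) n x)
      - (mul (dT 0 F) (dP G) n x + mul (dT 0 F) (dP H) n x)
    = (mul (dP F) (fun i => pd 0 (G i)) n x - mul (dT 0 F) (dP G) n x)
    + (mul (dP F) (fun i => pd 0 (H i)) n x - mul (dT 0 F) (dP H) n x)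
  ring

lemma expAdNeg_const [NeZero N] (φ h : (Fin N → ℝ) → ℝ) (n : ℤ) (x : Fin N → ℝ) :
    expAdNeg φ (const h) n x = const h n x := by
  rw [expAdNeg_eq_sum (ub_const h) φ (Kof_lt 0 n) x, Finset.sum_eq_single 0]
  · simp [izf_zero]
  · intro k _ hk0
    by_cases hnk : n + (k:ℤ) = 0
    · rw [izf_vanish (by omega) (by omega)]; ring
    · rw [const_apply, if_neg hnk]; ring
  · intro habs
    exact absurd (Finset.mem_range.mpr (Nat.pos_of_ne_zero fun h0 => habs (h0 ▸ Finset.mem_range.mpr (Nat.succ_pos _)))) (fun _ => habs (Finset.mem_range.mpr (Nat.succ_pos _)))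

lemma expAdNeg_nonneg_supp [NeZero N] {A : Coeffs N} {m : ℤ} (hA : UB A m)
    (hsupp : ∀ j : ℤ, j < 0 → A j = 0) (φ : (Fin N → ℝ) → ℝ) {n : ℤ} (hn : n < 0)
    (x : Fin N → ℝ) : expAdNeg φ A n x = 0 := by
  rw [expAdNeg_eq_sum hA φ (Kof_lt m n) x]
  apply Finset.sum_eq_zero
  intro k _
  by_cases hnk : n + (k:ℤ) < 0
  · have : A (n + k) x = 0 := by rw [hsupp _ hnk]; rfl
    rw [this]; ring
  · rw [izf_vanish hn (by omega)]; ring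

lemma expAdNeg_trunc_agree [NeZero N] {A : Coeffs N} {m : ℤ} (hA : UB A m)
    (φ : (Fin N → ℝ) → ℝ) (c : ℤ) {n : ℤ} (hn : c ≤ n) (x : Fin N → ℝ) :
    expAdNeg φ (truncGe c A) n x = expAdNeg φ A n x := by
  rw [expAdNeg_eq_sum (ub_truncGe hA c) φ (Kof_lt m n) x,
    expAdNeg_eq_sum hA φ (Kof_lt m n) x]
  apply Finset.sum_congr rfl
  intro k _
  unfold truncGe
  rw [if_pos (show c ≤ n + (k:ℤ) by omega)]

lemma expAdNeg_res [NeZero N] {A : Coeffs N} {m : ℤ} (hA : UB A m)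
    (φ : (Fin N → ℝ) → ℝ) (x : Fin N → ℝ) :
    expAdNeg φ A (-1) x = A (-1) x := by
  rw [expAdNeg_eq_sum hA φ (Kof_lt m (-1)) x, Finset.sum_eq_single 0]
  · simp [izf_zero]
  · intro k _ hk0
    rw [izf_vanish (show (-1:ℤ) < 0 by omega) (by omega)]
    ring
  · intro habs
    exact absurd (Finset.mem_range.mpr (Nat.succ_pos _)) habs

lemma expAdNeg_at_top [NeZero N] {A : Coeffs N} {m : ℤ} (hA : UB A m)
    (φ : (Fin N → ℝ) → ℝ) (x : Fin N → ℝ) :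
    expAdNeg φ A m x = A m x := by
  rw [expAdNeg_eq_sum hA φ (K := 1) (by omega) x]
  simp [izf_zero]

lemma expAdNeg_zero_coeff [NeZero N] {A : Coeffs N} {m : ℤ} (hA : UB A m)
    (φ : (Fin N → ℝ) → ℝ) (x : Fin N → ℝ) :
    expAdNeg φ A 0 x = ∑ k ∈ Finset.range (Kof m 0), (pd 0 φ x) ^ k * A (k:ℤ) x := by
  rw [expAdNeg_eq_sum hA φ (Kof_lt m 0) x]
  apply Finset.sum_congr rfl
  intro k _
  rw [izf_fact, show ((0:ℤ) + (k:ℤ)) = (k:ℤ) by ring]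
  have : (Nat.factorial k : ℝ) ≠ 0 := by positivity
  field_simp

-- ### Chunk 8: last helpers

lemma ub_pb [NeZero N] {F G : Coeffs N} {f g : ℤ} (hF : UB F f) (hG : UB G g) :
    UB (pb F G) (f + g) := by
  intro n hn; funext x
  show mul (dP F) (dT 0 G) n x - mul (dT 0 F) (dP G) n x = 0
  have z1 : mul (dP F) (dT 0 G) n x = 0 :=
    ub_apply (ub_mul (ub_dP hF) (ub_pd hG 0)) hn x
  have z2 : mul (dT 0 F) (dP G) n x = 0 :=
    ub_apply (ub_mul (ub_pd hF 0) (ub_dP hG)) hn x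
  rw [z1, z2]; ring

lemma smooth_const {h : (Fin N → ℝ) → ℝ} (hh : ContDiff ℝ (⊤ : ℕ∞) h) :
    SmoothCoeffs (const h) := by
  intro j
  unfold const
  split
  · exact hh
  · exact contDiff_const

lemma smooth_pb [NeZero N] {F G : Coeffs N} (sF : SmoothCoeffs F) (sG : SmoothCoeffs G)
    {f g : ℤ} (hF : UB F f) (hG : UB G g) : SmoothCoeffs (pb F G) := by
  intro n
  have h1 : pb F G n = fun x => mul (dP F) (dT 0 G) n x - mul (dT 0 F) (dP G) n x := rfl
  rw [h1]
  exact ((smooth_mul (ub_dP hF) (ub_pd hG 0) (smooth_dP sF) (smooth_dX sG 0)) n).sub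
    ((smooth_mul (ub_pd hF 0) (ub_dP hG) (smooth_dX sF 0) (smooth_dP sG)) n)

lemma mul_sub_right {F G H : Coeffs N} {f g : ℤ} (hF : UB F f) (hG : UB G g)
    (hH : UB H g) (n : ℤ) (x : Fin N → ℝ) :
    mul F (fun j y => G j y - H j y) n x = mul F G n x - mul F H n x := by
  have hGH : UB (fun j y => G j y - H j y) g := by
    intro j hj; funext y
    show G j y - H j y = 0
    rw [ub_apply hG hj y, ub_apply hH hj y]; ring
  rw [mul_eq_sum hF hGH n x, mul_eq_sum hF hG n x, mul_eq_sum hF hH n x,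
    ← Finset.sum_sub_distrib]
  apply Finset.sum_congr rfl
  intro i _
  ring

lemma pb_sub_right [NeZero N] {F G H : Coeffs N} {f g h : ℤ} (hF : UB F f)
    (hG : UB G g) (hH : UB H h) (sG : SmoothCoeffs G) (sH : SmoothCoeffs H)
    (n : ℤ) (x : Fin N → ℝ) :
    pb F (fun j y => G j y - H j y) n x = pb F G n x - pb F H n x := by
  have hG' : UB G (max g h) := hG.mono (le_max_left g h)
  have hH' : UB H (max g h) := hH.mono (le_max_right g h)
  have hdX : dT (0 : Fin N) (fun j y => G j y - H j y)
      = fun j y => pd 0 (G j) y - pd 0 (H j) y := by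
    funext j y
    exact pd_sub 0 ((sG j).differentiable (by simp)) ((sH j).differentiable (by simp)) y
  have hdP : dP (fun j y => G j y - H j y) = fun j y => dP G j y - dP H j y := by
    funext j y
    show ((j+1:ℤ):ℝ) * (G (j+1) y - H (j+1) y)
      = ((j+1:ℤ):ℝ) * G (j+1) y - ((j+1:ℤ):ℝ) * H (j+1) y
    ring
  show mul (dP F) (dT 0 (fun j y => G j y - H j y)) n x
      - mul (dT 0 F) (dP (fun j y => G j y - H j y)) n x = _
  rw [hdX, hdP]
  have e1 : mul (dP F) (fun j y => pd 0 (G j) y - pd 0 (H j) y) n x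
      = mul (dP F) (fun i => pd 0 (G i)) n x - mul (dP F) (fun i => pd 0 (H i)) n x :=
    mul_sub_right (ub_dP hF) (f := f) (g := max g h) (ub_pd hG' 0) (ub_pd hH' 0) n x
  have e2 : mul (dT 0 F) (fun j y => dP G j y - dP H j y) n x
      = mul (dT 0 F) (dP G) n x - mul (dT 0 F) (dP H) n x :=
    mul_sub_right (F := dT 0 F) (ub_pd hF 0) (f := f) (g := max g h)
      (ub_dP hG') (ub_dP hH') n x
  rw [e1, e2]
  show (mul (dP F) (fun i => pd 0 (G i)) n x - mul (dP F) (fun i => pd 0 (H i)) n x)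
      - (mul (dT 0 F) (dP G) n x - mul (dT 0 F) (dP H) n x)
    = (mul (dP F) (fun i => pd 0 (G i)) n x - mul (dT 0 F) (dP G) n x)
    - (mul (dP F) (fun i => pd 0 (H i)) n x - mul (dT 0 F) (dP H) n x)
  ring

/-- Theorem 9, first structure: with `μ = e^{-ad φ}λ`,
`C = G′†A = e^{-ad φ}A + P⁻¹ρ` (`∂_X ρ = res{A,λ}`) and
`B = J⁽¹⁾C = {μ,C}_{≥-1} - {μ,C_{≥1}}`, one has `(B)₀ = ∂_X((e^{-ad φ}A)₀)` and
`e^{ad φ}B + {(e^{-ad φ}A)₀, λ} = {λ,A}_+ - {λ,A_+} = Θ⁽¹⁾(A)`. -/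
theorem statement12 {N : ℕ} [NeZero N] (lam : Coeffs N) (hshape : IsDKPShape lam)
    (hlam : IsLaurent lam)
    (φ : (Fin N → ℝ) → ℝ) (hφ : ContDiff ℝ (⊤ : ℕ∞) φ)
    (A : Coeffs N) (hA : IsLaurent A)
    (ρ : (Fin N → ℝ) → ℝ) (hρ : ContDiff ℝ (⊤ : ℕ∞) ρ) (hρX : pd 0 ρ = res (pb A lam))
    (C B : Coeffs N)
    (hC : C = fun n x => expAdNeg φ A n x + (if n = -1 then ρ x else 0))
    (hB : B = fun n x => truncGe (-1) (pb (expAdNeg φ lam) C) n x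
                - pb (expAdNeg φ lam) (truncGe 1 C) n x) :
    (B 0 = pd 0 (expAdNeg φ A 0)) ∧
    ((fun (n : ℤ) (x : Fin N → ℝ) =>
        expAdPos φ B n x + pb (const (expAdNeg φ A 0)) lam n x)
      = fun (n : ℤ) (x : Fin N → ℝ) =>
          truncGe 0 (pb lam A) n x - pb lam (truncGe 0 A) n x) := by
  classical
  obtain ⟨hshape1, hshape0, hshape2⟩ := hshape
  obtain ⟨⟨m0, hm0⟩, sA⟩ := hA
  have hAub : UB A m0 := hm0
  have slam : SmoothCoeffs lam := hlam.2
  have hlamub : UB lam 1 := fun n hn => hshape2 n (by omega)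
  -- basic objects
  have sEA : SmoothCoeffs (expAdNeg φ A) := smooth_expAdNeg hAub sA hφ
  have hEAub : UB (expAdNeg φ A) m0 := ub_expAdNeg hAub φ
  have hA1ub : UB (truncGe 1 A) m0 := ub_truncGe hAub 1
  have sA1 : SmoothCoeffs (truncGe 1 A) := smooth_truncGe sA 1
  set g : (Fin N → ℝ) → ℝ := expAdNeg φ (truncGe 1 A) 0 with hg
  have sg : ContDiff ℝ (⊤ : ℕ∞) g := by rw [hg]; exact smooth_expAdNeg hA1ub sA1 hφ 0
  have hμub : UB (expAdNeg φ lam) 1 := ub_expAdNeg hlamub φ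
  have sμ : SmoothCoeffs (expAdNeg φ lam) := smooth_expAdNeg hlamub slam hφ
  have hDub : UB (pb lam A) (1 + m0) := ub_pb hlamub hAub
  have hD0ub : UB (truncGe 0 (pb lam A)) (1 + m0) := ub_truncGe hDub 0
  have hD'ub : UB (pb lam (truncGe 1 A)) (1 + m0) := ub_pb hlamub hA1ub
  have hπub : UB (fun j (y : Fin N → ℝ) => if j = (-1:ℤ) then ρ y else 0) (-1) := by
    intro j hj; funext y
    show (if j = (-1:ℤ) then ρ y else 0) = (0:ℝ)
    rw [if_neg (by omega)]
  have sπ : SmoothCoeffs (fun j (y : Fin N → ℝ) => if j = (-1:ℤ) then ρ y else 0) := by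
    intro j
    by_cases hj : j = (-1:ℤ)
    · simp only [if_pos hj]; exact hρ
    · simp only [if_neg hj]; exact contDiff_const
  -- μ coefficient facts
  have hdpμ0 : ∀ x₀ : Fin N → ℝ, dP (expAdNeg φ lam) 0 x₀ = 1 := by
    intro x₀
    show ((0+1:ℤ):ℝ) * expAdNeg φ lam (0+1) x₀ = 1
    rw [show ((0:ℤ)+1) = (1:ℤ) from by norm_num, expAdNeg_at_top hlamub φ x₀, hshape1]
    simp
  have hμ1pd : ∀ x₀ : Fin N → ℝ, pd 0 (expAdNeg φ lam 1) x₀ = 0 := by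
    intro x₀
    have h1 : expAdNeg φ lam 1 = fun _ => (1:ℝ) := by
      funext y; rw [expAdNeg_at_top hlamub φ y, hshape1]
    rw [h1, pd_const]
  -- Q = {μ, C} decomposition
  have hQ : ∀ (n : ℤ) (x₀ : Fin N → ℝ), pb (expAdNeg φ lam) C n x₀
      = expAdNeg φ (pb lam A) n x₀
        + (dP (expAdNeg φ lam) (n+1) x₀ * pd 0 ρ x₀
            + pd 0 (expAdNeg φ lam (n+2)) x₀ * ρ x₀) := by
    intro n x₀
    have h1 : pb (expAdNeg φ lam) C n x₀
        = pb (expAdNeg φ lam) (expAdNeg φ A) n x₀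
          + pb (expAdNeg φ lam) (fun j (y : Fin N → ℝ) => if j = (-1:ℤ) then ρ y else 0) n x₀ := by
      rw [hC]
      exact pb_add_right hμub hEAub hπub sEA sπ n x₀
    have h2 : pb (expAdNeg φ lam) (expAdNeg φ A) n x₀ = expAdNeg φ (pb lam A) n x₀ :=
      (expAdNeg_pb hlamub hAub slam sA hφ n x₀).symm
    have hdTπ : dT (0 : Fin N) (fun j (y : Fin N → ℝ) => if j = (-1:ℤ) then ρ y else 0)
        = fun j => fun y => if j = (-1:ℤ) then pd 0 ρ y else 0 := by
      funext j y
      show pd 0 (fun y' => if j = (-1:ℤ) then ρ y' else 0) y = _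
      by_cases hj : j = (-1:ℤ)
      · rw [if_pos hj]
        have he : (fun y' => if j = (-1:ℤ) then ρ y' else 0) = ρ := funext fun y' => if_pos hj
        rw [he]
      · rw [if_neg hj]
        have he : (fun y' => if j = (-1:ℤ) then ρ y' else 0) = fun _ => (0:ℝ) :=
          funext fun y' => if_neg hj
        rw [he, pd_const]
    have hdPπ : dP (fun j (y : Fin N → ℝ) => if j = (-1:ℤ) then ρ y else 0)
        = fun j => fun y => if j = (-2:ℤ) then -(ρ y) else 0 := by
      funext j y
      show ((j+1:ℤ):ℝ) * (if j + 1 = (-1:ℤ) then ρ y else 0) = _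
      by_cases hj : j = (-2:ℤ)
      · rw [if_pos (show j + 1 = (-1:ℤ) by omega), if_pos hj, hj]
        push_cast; ring
      · rw [if_neg (show ¬ j + 1 = (-1:ℤ) by omega), if_neg hj]; ring
    have h3 : pb (expAdNeg φ lam) (fun j (y : Fin N → ℝ) => if j = (-1:ℤ) then ρ y else 0) n x₀
        = dP (expAdNeg φ lam) (n+1) x₀ * pd 0 ρ x₀
          + pd 0 (expAdNeg φ lam (n+2)) x₀ * ρ x₀ := by
      show mul (dP (expAdNeg φ lam))
          (dT 0 (fun j (y : Fin N → ℝ) => if j = (-1:ℤ) then ρ y else 0)) n x₀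
        - mul (dT 0 (expAdNeg φ lam))
          (dP (fun j (y : Fin N → ℝ) => if j = (-1:ℤ) then ρ y else 0)) n x₀ = _
      rw [hdTπ, hdPπ]
      have m1 : mul (dP (expAdNeg φ lam))
          (fun j => fun y => if j = (-1:ℤ) then pd 0 ρ y else 0) n x₀
          = dP (expAdNeg φ lam) (n - (-1)) x₀ * pd 0 ρ x₀ :=
        mul_single_right _ _ _ n x₀
      have m2 : mul (dT 0 (expAdNeg φ lam))
          (fun j => fun y => if j = (-2:ℤ) then -(ρ y) else 0) n x₀
          = dT 0 (expAdNeg φ lam) (n - (-2)) x₀ * -(ρ x₀) :=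
        mul_single_right _ (fun y => -(ρ y)) _ n x₀
      rw [m1, m2, show n - (-1 : ℤ) = n + 1 from by ring,
        show n - (-2 : ℤ) = n + 2 from by ring]
      show dP (expAdNeg φ lam) (n+1) x₀ * pd 0 ρ x₀
          - pd 0 (expAdNeg φ lam (n+2)) x₀ * -(ρ x₀) = _
      ring
    rw [h1, h2, h3]
  -- R vanishes for n ≥ 0
  have hRzero : ∀ (n : ℤ), 0 ≤ n → ∀ (x₀ : Fin N → ℝ),
      dP (expAdNeg φ lam) (n+1) x₀ * pd 0 ρ x₀
        + pd 0 (expAdNeg φ lam (n+2)) x₀ * ρ x₀ = 0 := by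
    intro n hn x₀
    have z1 : expAdNeg φ lam (n+2) = 0 := hμub (n+2) (by omega)
    have z2 : dP (expAdNeg φ lam) (n+1) x₀ = 0 := by
      show ((n+1+1:ℤ):ℝ) * expAdNeg φ lam (n+1+1) x₀ = 0
      rw [show (n+1+1:ℤ) = n+2 from by ring, z1]
      simp
    have z3 : pd 0 (expAdNeg φ lam (n+2)) x₀ = 0 := by
      rw [z1]
      show pd 0 (fun _ => (0:ℝ)) x₀ = 0
      rw [pd_const]
    rw [z2, z3]; ring
  -- residue cancellation at n = -1
  have hres : ∀ x₀ : Fin N → ℝ, expAdNeg φ (pb lam A) (-1) x₀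
      + (dP (expAdNeg φ lam) ((-1)+1) x₀ * pd 0 ρ x₀
          + pd 0 (expAdNeg φ lam ((-1)+2)) x₀ * ρ x₀) = 0 := by
    intro x₀
    rw [show ((-1:ℤ)+1) = (0:ℤ) from by norm_num,
      show ((-1:ℤ)+2) = (1:ℤ) from by norm_num,
      expAdNeg_res hDub φ x₀, hdpμ0 x₀, hμ1pd x₀]
    have z3 : pd 0 ρ x₀ = pb A lam (-1) x₀ := by rw [hρX]; rfl
    rw [z3]
    have := pb_antisymm lam A (-1) x₀
    linarith
  -- h5 : the first truncation equals e(D₊)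
  have h5 : ∀ (n : ℤ) (x₀ : Fin N → ℝ),
      truncGe (-1) (pb (expAdNeg φ lam) C) n x₀
        = expAdNeg φ (truncGe 0 (pb lam A)) n x₀ := by
    intro n x₀
    have hD0supp : ∀ j : ℤ, j < 0 → truncGe 0 (pb lam A) j = 0 := by
      intro j hj; unfold truncGe; rw [if_neg (by omega)]
    by_cases hn : (0:ℤ) ≤ n
    · have hl : truncGe (-1) (pb (expAdNeg φ lam) C) n x₀ = pb (expAdNeg φ lam) C n x₀ := by
        unfold truncGe; rw [if_pos (by omega)]
      rw [hl, hQ n x₀, hRzero n hn x₀, add_zero]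
      exact (expAdNeg_trunc_agree hDub φ 0 hn x₀).symm
    · by_cases hn1 : n = -1
      · subst hn1
        have hl : truncGe (-1) (pb (expAdNeg φ lam) C) (-1) x₀
            = pb (expAdNeg φ lam) C (-1) x₀ := by
          unfold truncGe; rw [if_pos le_rfl]
        rw [hl, hQ (-1) x₀,
          expAdNeg_nonneg_supp hD0ub hD0supp φ (by omega) x₀]
        have := hres x₀
        linarith
      · have hl : truncGe (-1) (pb (expAdNeg φ lam) C) n x₀ = 0 := by
          unfold truncGe; rw [if_neg (by omega)]; rfl
        rw [hl, expAdNeg_nonneg_supp hD0ub hD0supp φ (by omega) x₀]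
  -- truncation of C at 1
  have hC1 : truncGe 1 C
      = fun j y => expAdNeg φ (truncGe 1 A) j y - const g j y := by
    funext j y
    have hCval : ∀ (i : ℤ) (z : Fin N → ℝ),
        C i z = expAdNeg φ A i z + (if i = -1 then ρ z else 0) := by
      intro i z; rw [hC]
    have htr1supp : ∀ i : ℤ, i < 0 → truncGe 1 A i = 0 := by
      intro i hi; unfold truncGe; rw [if_neg (by omega)]
    by_cases h1j : (1:ℤ) ≤ j
    · have hl : truncGe 1 C j y = C j y := by unfold truncGe; rw [if_pos h1j]
      rw [hl, hCval j y, if_neg (by omega), expAdNeg_trunc_agree hAub φ 1 h1j y,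
        const_apply, if_neg (by omega)]
      ring
    · by_cases h0j : j = 0
      · subst h0j
        have hl : truncGe 1 C 0 y = 0 := by
          unfold truncGe; rw [if_neg (by omega)]; rfl
        rw [hl, const_apply, if_pos rfl, ← hg]
        ring
      · have hl : truncGe 1 C j y = 0 := by
          unfold truncGe; rw [if_neg h1j]; rfl
        rw [hl, const_apply, if_neg h0j,
          expAdNeg_nonneg_supp hA1ub htr1supp φ (by omega) y]
        ring
  -- second bracket
  have h2' : ∀ (n : ℤ) (x₀ : Fin N → ℝ), pb (expAdNeg φ lam) (truncGe 1 C) n x₀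
      = expAdNeg φ (pb lam (truncGe 1 A)) n x₀
        - pb (expAdNeg φ lam) (const g) n x₀ := by
    intro n x₀
    rw [hC1]
    have e := pb_sub_right (F := expAdNeg φ lam) (G := expAdNeg φ (truncGe 1 A))
      (H := const g) hμub (ub_expAdNeg hA1ub φ) (ub_const g)
      (smooth_expAdNeg hA1ub sA1 hφ) (smooth_const sg) n x₀
    rw [e, ← expAdNeg_pb hlamub hA1ub slam sA1 hφ n x₀]
  have hpbg : ∀ (n : ℤ) (x₀ : Fin N → ℝ), pb (expAdNeg φ lam) (const g) n x₀
      = expAdNeg φ (pb lam (const g)) n x₀ := by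
    intro n x₀
    have hcg : expAdNeg φ (const g) = const g :=
      funext fun j => funext fun y => expAdNeg_const φ g j y
    calc pb (expAdNeg φ lam) (const g) n x₀
        = pb (expAdNeg φ lam) (expAdNeg φ (const g)) n x₀ := by rw [hcg]
      _ = expAdNeg φ (pb lam (const g)) n x₀ :=
        (expAdNeg_pb hlamub (ub_const g) slam (smooth_const sg) hφ n x₀).symm
  -- B as expAdNeg of M
  have hsubub : UB (fun j (y : Fin N → ℝ) => truncGe 0 (pb lam A) j y
      - pb lam (truncGe 1 A) j y) (1 + m0) := by
    intro j hj; funext y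
    show truncGe 0 (pb lam A) j y - pb lam (truncGe 1 A) j y = 0
    rw [ub_apply hD0ub hj y, ub_apply hD'ub hj y]; ring
  have hMub : UB (fun j (y : Fin N → ℝ) => (truncGe 0 (pb lam A) j y
      - pb lam (truncGe 1 A) j y) + pb lam (const g) j y) (max (1 + m0) 1) := by
    intro j hj; funext y
    show (truncGe 0 (pb lam A) j y - pb lam (truncGe 1 A) j y)
      + pb lam (const g) j y = 0
    have hj1 : 1 + m0 < j := by
      have := le_max_left (1 + m0) (1:ℤ); omega
    have hj2 : (1:ℤ) + 0 < j := by
      have := le_max_right (1 + m0) (1:ℤ); omega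
    rw [ub_apply hD0ub hj1 y, ub_apply hD'ub hj1 y,
      ub_apply (ub_pb hlamub (ub_const g)) hj2 y]
    ring
  have hBfun : B = expAdNeg φ (fun j (y : Fin N → ℝ) =>
      (truncGe 0 (pb lam A) j y - pb lam (truncGe 1 A) j y)
        + pb lam (const g) j y) := by
    funext n x₀
    have hBval : B n x₀ = truncGe (-1) (pb (expAdNeg φ lam) C) n x₀
        - pb (expAdNeg φ lam) (truncGe 1 C) n x₀ := by rw [hB]
    rw [hBval, h5 n x₀, h2' n x₀, hpbg n x₀]
    have l1 : expAdNeg φ (fun j (y : Fin N → ℝ) =>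
        (truncGe 0 (pb lam A) j y - pb lam (truncGe 1 A) j y)
          + pb lam (const g) j y) n x₀
        = expAdNeg φ (fun j (y : Fin N → ℝ) => truncGe 0 (pb lam A) j y
            - pb lam (truncGe 1 A) j y) n x₀
          + expAdNeg φ (pb lam (const g)) n x₀ :=
      expAdNeg_add (u := 1 + m0) (w := 1 + 0) hsubub
        (ub_pb hlamub (ub_const g)) (fun j y => rfl) φ n x₀
    have l2 : expAdNeg φ (fun j (y : Fin N → ℝ) => truncGe 0 (pb lam A) j y
        - pb lam (truncGe 1 A) j y) n x₀
        = expAdNeg φ (truncGe 0 (pb lam A)) n x₀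
          - expAdNeg φ (pb lam (truncGe 1 A)) n x₀ :=
      expAdNeg_sub hD0ub hD'ub (fun j y => rfl) φ n x₀
    rw [l1, l2]
    ring
  -- the coefficient-level difference identity
  have hdiffk : ∀ (x₀ : Fin N → ℝ) (k : ℤ), 0 ≤ k →
      truncGe 0 (pb lam A) k x₀ - pb lam (truncGe 1 A) k x₀
        = (if k = 0 then pd 0 (A 0) x₀ else 0) := by
    intro x₀ k hk
    have htr : truncGe 0 (pb lam A) k x₀ = pb lam A k x₀ := by
      unfold truncGe; rw [if_pos hk]
    have hAnegub : UB (fun j (y : Fin N → ℝ) => if j ≤ (0:ℤ) then A j y else 0) 0 := by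
      intro j hj; funext y
      show (if j ≤ (0:ℤ) then A j y else 0) = (0:ℝ)
      rw [if_neg (by omega)]
    have sAneg : SmoothCoeffs (fun j (y : Fin N → ℝ) => if j ≤ (0:ℤ) then A j y else 0) := by
      intro j
      by_cases hj : j ≤ (0:ℤ)
      · simp only [if_pos hj]; exact sA j
      · simp only [if_neg hj]; exact contDiff_const
    have hAeq : A = fun j y => truncGe 1 A j y
        + (fun j (y : Fin N → ℝ) => if j ≤ (0:ℤ) then A j y else 0) j y := by
      funext j y
      show A j y = truncGe 1 A j y + (if j ≤ (0:ℤ) then A j y else 0)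
      unfold truncGe
      by_cases h1 : (1:ℤ) ≤ j
      · rw [if_pos h1, if_neg (by omega)]; ring
      · rw [if_neg h1, if_pos (by omega)]; simp
    have hsplit : pb lam A k x₀ = pb lam (truncGe 1 A) k x₀
        + pb lam (fun j (y : Fin N → ℝ) => if j ≤ (0:ℤ) then A j y else 0) k x₀ := by
      have h0 := pb_add_right (F := lam) (g := m0) (h := (0:ℤ)) hlamub
        (ub_truncGe hAub 1) hAnegub sA1 sAneg k x₀
      calc pb lam A k x₀
          = pb lam (fun j y => truncGe 1 A j y
              + (fun j (y : Fin N → ℝ) => if j ≤ (0:ℤ) then A j y else 0) j y) k x₀ := by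
            conv_lhs => rw [hAeq]
        _ = _ := h0
    have hver : pb lam (fun j (y : Fin N → ℝ) => if j ≤ (0:ℤ) then A j y else 0) k x₀
        = (if k = 0 then pd 0 (A 0) x₀ else 0) := by
      have hz2 : mul (dT 0 lam)
          (dP (fun j (y : Fin N → ℝ) => if j ≤ (0:ℤ) then A j y else 0)) k x₀ = 0 := by
        show (∑' i : ℤ, dT 0 lam i x₀
          * dP (fun j (y : Fin N → ℝ) => if j ≤ (0:ℤ) then A j y else 0) (k-i) x₀) = 0
        have hterm : ∀ i : ℤ, dT 0 lam i x₀
            * dP (fun j (y : Fin N → ℝ) => if j ≤ (0:ℤ) then A j y else 0) (k-i) x₀ = 0 := by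
          intro i
          by_cases hi : 1 ≤ i
          · have hv : dT 0 lam i x₀ = 0 := by
              show pd 0 (lam i) x₀ = 0
              by_cases hi2 : 2 ≤ i
              · rw [hshape2 i hi2]
                show pd 0 (fun _ => (0:ℝ)) x₀ = 0
                rw [pd_const]
              · have : i = 1 := by omega
                subst this; rw [hshape1, pd_const]
            rw [hv]; ring
          · have hv : dP (fun j (y : Fin N → ℝ) => if j ≤ (0:ℤ) then A j y else 0) (k-i) x₀ = 0 := by
              show ((k-i+1:ℤ):ℝ) * (if k-i+1 ≤ (0:ℤ) then A (k-i+1) x₀ else 0) = 0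
              rw [if_neg (by omega)]; ring
            rw [hv]; ring
        calc (∑' i : ℤ, dT 0 lam i x₀
            * dP (fun j (y : Fin N → ℝ) => if j ≤ (0:ℤ) then A j y else 0) (k-i) x₀)
            = ∑' i : ℤ, (0:ℝ) := tsum_congr hterm
          _ = 0 := tsum_zero
      have hz1 : mul (dP lam)
          (dT 0 (fun j (y : Fin N → ℝ) => if j ≤ (0:ℤ) then A j y else 0)) k x₀
          = (if k = 0 then pd 0 (A 0) x₀ else 0) := by
        show (∑' i : ℤ, dP lam i x₀
          * dT 0 (fun j (y : Fin N → ℝ) => if j ≤ (0:ℤ) then A j y else 0) (k-i) x₀) = _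
        rw [tsum_eq_single 0 ?side]
        case side =>
          intro i hi
          by_cases hi1 : 1 ≤ i
          · have hv : dP lam i x₀ = 0 := by
              show ((i+1:ℤ):ℝ) * lam (i+1) x₀ = 0
              have : lam (i+1) x₀ = 0 := by rw [hshape2 (i+1) (by omega)]; rfl
              rw [this]; ring
            rw [hv]; ring
          · have hv : dT 0 (fun j (y : Fin N → ℝ) => if j ≤ (0:ℤ) then A j y else 0) (k-i) x₀ = 0 := by
              show pd 0 (fun y => if k-i ≤ (0:ℤ) then A (k-i) y else 0) x₀ = 0
              have he : (fun y => if k-i ≤ (0:ℤ) then A (k-i) y else 0) = fun _ => (0:ℝ) :=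
                funext fun y => if_neg (by omega)
              rw [he, pd_const]
            rw [hv]; ring
        · have hdpl : dP lam 0 x₀ = 1 := by
            show ((0+1:ℤ):ℝ) * lam (0+1) x₀ = 1
            rw [show ((0:ℤ)+1) = (1:ℤ) from by norm_num, hshape1]
            simp
          rw [hdpl, one_mul, show k - (0:ℤ) = k from by ring]
          by_cases hk0 : k = 0
          · subst hk0
            rw [if_pos rfl]
            show pd 0 (fun y => if (0:ℤ) ≤ (0:ℤ) then A 0 y else 0) x₀ = _
            have he : (fun y => if (0:ℤ) ≤ (0:ℤ) then A 0 y else 0) = A 0 :=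
              funext fun y => if_pos le_rfl
            rw [he]
          · rw [if_neg hk0]
            show pd 0 (fun y => if k ≤ (0:ℤ) then A k y else 0) x₀ = 0
            have he : (fun y => if k ≤ (0:ℤ) then A k y else 0) = fun _ => (0:ℝ) :=
              funext fun y => if_neg (by omega)
            rw [he, pd_const]
      show mul (dP lam)
          (dT 0 (fun j (y : Fin N → ℝ) => if j ≤ (0:ℤ) then A j y else 0)) k x₀
        - mul (dT 0 lam)
          (dP (fun j (y : Fin N → ℝ) => if j ≤ (0:ℤ) then A j y else 0)) k x₀ = _
      rw [hz1, hz2]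
      ring
    rw [htr, hsplit, hver]
    ring
  -- decomposition of (e^{-adφ}A)₀
  have hA0 : expAdNeg φ A 0 = fun y => A 0 y + g y := by
    funext y
    rw [expAdNeg_zero_coeff hAub φ y]
    have hgv : g y = ∑ k ∈ Finset.range (Kof m0 0), pd 0 φ y ^ k * truncGe 1 A (k:ℤ) y := by
      rw [hg]; exact expAdNeg_zero_coeff hA1ub φ y
    have hdiff : (∑ k ∈ Finset.range (Kof m0 0), pd 0 φ y ^ k * A (k:ℤ) y)
        - (∑ k ∈ Finset.range (Kof m0 0), pd 0 φ y ^ k * truncGe 1 A (k:ℤ) y)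
        = A 0 y := by
      rw [← Finset.sum_sub_distrib, Finset.sum_eq_single 0]
      · have htr : truncGe 1 A ((0:ℕ):ℤ) y = 0 := by
          unfold truncGe; rw [if_neg (by omega)]; rfl
        rw [htr]
        simp
      · intro k _ hk0
        have htr : truncGe 1 A (k:ℤ) y = A (k:ℤ) y := by
          unfold truncGe; rw [if_pos (by omega)]
        rw [htr]; ring
      · intro habs
        exact absurd (Finset.mem_range.mpr (Nat.succ_pos _)) habs
    rw [hgv]
    linarith
  have hpdA0 : ∀ x₀ : Fin N → ℝ, pd 0 (expAdNeg φ A 0) x₀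
      = pd 0 (A 0) x₀ + pd 0 g x₀ := by
    intro x₀
    rw [hA0]
    exact pd_add 0 ((sA 0).differentiable (by simp)) (sg.differentiable (by simp)) x₀
  constructor
  · -- Claim 1 : (B)₀ = ∂_X (e^{-adφ}A)₀
    funext x₀
    have hBval : B 0 x₀ = truncGe (-1) (pb (expAdNeg φ lam) C) 0 x₀
        - pb (expAdNeg φ lam) (truncGe 1 C) 0 x₀ := by rw [hB]
    rw [hBval, h5 0 x₀, h2' 0 x₀, pb_const_right (expAdNeg φ lam) g 0 x₀, hdpμ0 x₀]
    have key : expAdNeg φ (truncGe 0 (pb lam A)) 0 x₀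
        - expAdNeg φ (pb lam (truncGe 1 A)) 0 x₀ = pd 0 (A 0) x₀ := by
      rw [expAdNeg_zero_coeff hD0ub φ x₀, expAdNeg_zero_coeff hD'ub φ x₀,
        ← Finset.sum_sub_distrib]
      rw [Finset.sum_eq_single 0]
      · have h00 := hdiffk x₀ ((0:ℕ):ℤ) (by omega)
        rw [show pd 0 φ x₀ ^ 0 * truncGe 0 (pb lam A) ((0:ℕ):ℤ) x₀
            - pd 0 φ x₀ ^ 0 * pb lam (truncGe 1 A) ((0:ℕ):ℤ) x₀
            = truncGe 0 (pb lam A) ((0:ℕ):ℤ) x₀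
              - pb lam (truncGe 1 A) ((0:ℕ):ℤ) x₀ from by ring, h00,
          if_pos (show ((0:ℕ):ℤ) = 0 from by norm_num)]
      · intro k _ hk0
        have hkk := hdiffk x₀ (k:ℤ) (by omega)
        rw [show pd 0 φ x₀ ^ k * truncGe 0 (pb lam A) (k:ℤ) x₀
            - pd 0 φ x₀ ^ k * pb lam (truncGe 1 A) (k:ℤ) x₀
            = pd 0 φ x₀ ^ k * (truncGe 0 (pb lam A) (k:ℤ) x₀
              - pb lam (truncGe 1 A) (k:ℤ) x₀) from by ring, hkk,
          if_neg (show ¬ ((k:ℤ) = 0) from by omega)]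
        ring
      · intro habs
        exact absurd (Finset.mem_range.mpr (Nat.succ_pos _)) habs
    rw [hpdA0 x₀]
    linarith
  · -- Claim 2
    funext n x₀
    rw [hBfun, expAdPos_expAdNeg hMub φ n x₀, pb_const_left lam (expAdNeg φ A 0) n x₀,
      hpdA0 x₀]
    have htr0 : pb lam (truncGe 0 A) n x₀
        = pb lam (truncGe 1 A) n x₀ + dP lam n x₀ * pd 0 (A 0) x₀ := by
      have htreq : truncGe 0 A = fun j y => truncGe 1 A j y + const (A 0) j y := by
        funext j y
        show (if (0:ℤ) ≤ j then A j else 0) y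
          = (if (1:ℤ) ≤ j then A j else 0) y + const (A 0) j y
        rw [const_apply]
        by_cases h1 : (1:ℤ) ≤ j
        · rw [if_pos (by omega), if_pos h1, if_neg (by omega)]; ring
        · by_cases h0 : j = 0
          · subst h0
            rw [if_pos le_rfl, if_neg (by omega), if_pos rfl]
            simp
          · rw [if_neg (by omega), if_neg h1, if_neg h0]
            simp
      have h0 : pb lam (fun j y => truncGe 1 A j y + const (A 0) j y) n x₀
          = pb lam (truncGe 1 A) n x₀ + pb lam (const (A 0)) n x₀ :=
        pb_add_right (g := m0) (h := (0:ℤ)) hlamub (ub_truncGe hAub 1)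
          (ub_const (A 0)) sA1 (smooth_const (sA 0)) n x₀
      rw [htreq, h0, pb_const_right lam (A 0) n x₀]
    rw [htr0]
    show (truncGe 0 (pb lam A) n x₀ - pb lam (truncGe 1 A) n x₀)
        + pb lam (const g) n x₀
        + -((pd 0 (A 0) x₀ + pd 0 g x₀) * dP lam n x₀)
      = truncGe 0 (pb lam A) n x₀
        - (pb lam (truncGe 1 A) n x₀ + dP lam n x₀ * pd 0 (A 0) x₀)
    rw [pb_const_right lam g n x₀]
    ring

end DMKP
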